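/- arXiv:math/0111040 — 5 statements merged into one kernel-verified Lean document; each statement's English description precedes it below -/
import Mathlib

section
/- Let K be an algebraically closed field and d ≥ 1 an integer. Let F(s,t) = Σ_{i=0}^{d} f_i s^{d−i} t^i and G(s,t) = Σ_{i=0}^{d} g_i s^{d−i} t^i be two binary forms of degree d over K, and let A = (a_{ij})_{1≤i,j≤d} be their Bézout matrix as defined in the context. Then det A = 0 if and only if F and G have a common projective zero, i.e. there exists (s,t) ∈ K² with (s,t) ≠ (0,0) and F(s,t) = G(s,t) = 0. (This expresses that det A is the Chow form of the rational normal curve of degree d evaluated at the pencil spanned by F and G.) -/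
/-- The Bézout matrix of two binary forms of degree `d` with coefficient vectors
`f = (f_0,…,f_d)` and `g = (g_0,…,g_d)`: the `d×d` matrix whose `(i,j)` entry
(1-indexed, here realized with 0-based `Fin d` indices) is
`Σ [p,q]` over all `0 ≤ p < q ≤ d` with `p < min(i,j)` and `p + q = i + j − 1`,
where `[p,q] = f_p g_q − f_q g_p`. -/
def bezoutMatrix {K : Type*} [CommRing K] (d : ℕ) (f g : ℕ → K) :
    Matrix (Fin d) (Fin d) K :=
  Matrix.of fun i j =>
    ∑ p ∈ Finset.range (d + 1), ∑ q ∈ Finset.range (d + 1),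
      if p < q ∧ p ≤ min i.val j.val ∧ p + q = i.val + j.val + 1 then
        f p * g q - f q * g p
      else 0

namespace BezoutChow

variable {K : Type*} [Field K]

/-- closed form for the Bézout matrix entries, as a function on `ℕ`. -/
def abar (f g : ℕ → K) (u j : ℕ) : K :=
  ∑ p ∈ Finset.range (min u j + 1),
    (f p * g (u + j + 1 - p) - f (u + j + 1 - p) * g p)

lemma abar_symm (f g : ℕ → K) (u j : ℕ) : abar f g u j = abar f g j u := by
  unfold abar
  rw [min_comm]
  refine Finset.sum_congr rfl fun p hp => ?_
  rw [show u + j + 1 - p = j + u + 1 - p by omega]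

lemma abar_key (f g : ℕ → K) (u j : ℕ) :
    abar f g u (j + 1)
      = abar f g (u + 1) j + (f (j + 1) * g (u + 1) - f (u + 1) * g (j + 1)) := by
  unfold abar
  have hidx : ∀ p : ℕ, u + (j + 1) + 1 - p = (u + 1) + j + 1 - p := fun p => by omega
  rcases lt_trichotomy u j with h | h | h
  · rw [show min u (j + 1) = u by omega, show min (u + 1) j = u + 1 by omega]
    conv_rhs => rw [Finset.sum_range_succ]
    rw [show (u + 1) + j + 1 - (u + 1) = j + 1 by omega]
    rw [Finset.sum_congr rfl fun p (hp : p ∈ Finset.range (u+1)) => by rw [hidx p]]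
    ring
  · subst h
    rw [show min u (u + 1) = u by omega, show min (u + 1) u = u by omega]
    rw [Finset.sum_congr rfl fun p (hp : p ∈ Finset.range (u+1)) => by rw [hidx p]]
    ring
  · rw [show min u (j + 1) = j + 1 by omega, show min (u + 1) j = j by omega]
    conv_lhs => rw [Finset.sum_range_succ]
    rw [show u + (j + 1) + 1 - (j + 1) = u + 1 by omega]
    rw [Finset.sum_congr rfl fun p (hp : p ∈ Finset.range (j+1)) => by rw [hidx p]]

lemma abar_row0 (f g : ℕ → K) (j : ℕ) :
    abar f g 0 j = f 0 * g (j + 1) - f (j + 1) * g 0 := by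
  unfold abar
  rw [show min 0 j = 0 from by omega]
  rw [Finset.sum_range_one]
  rw [show 0 + j + 1 - 0 = j + 1 by omega]

section Truncated

variable {d : ℕ} {f g : ℕ → K}
variable (hf : ∀ k, d < k → f k = 0) (hg : ∀ k, d ≤ k → g k = 0)

include hf hg in
lemma abar_vanish (u j : ℕ) (hu : d ≤ u) : abar f g u j = 0 := by
  unfold abar
  refine Finset.sum_eq_zero fun p hp => ?_
  rw [Finset.mem_range] at hp
  have hq : d < u + j + 1 - p := by omega
  rw [hf (u + j + 1 - p) hq, hg (u + j + 1 - p) (le_of_lt hq)]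
  ring

include hf hg in
lemma abar_lastcol (hfd : f d = 1) (hgd : g d = 0) (u : ℕ) (hu : u ≤ d) (hd : 1 ≤ d) :
    abar f g u (d - 1) = -g u := by
  rcases eq_or_lt_of_le hu with rfl | hu'
  · rw [abar_vanish hf hg _ _ le_rfl, hgd, neg_zero]
  · unfold abar
    rw [show min u (d - 1) = u by omega]
    rw [Finset.sum_eq_single_of_mem u (Finset.self_mem_range_succ u)]
    · rw [show u + (d - 1) + 1 - u = d by omega, hfd, hgd]
      ring
    · intro p hp hpu
      rw [Finset.mem_range] at hp
      have hq : d < u + (d - 1) + 1 - p := by omega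
      rw [hf _ hq, hg _ (le_of_lt hq)]
      ring

include hf hg in
lemma bez_entry (i j : Fin d) :
    bezoutMatrix d f g i j = abar f g i.val j.val := by
  have hi := i.isLt
  have hj := j.isLt
  unfold bezoutMatrix
  rw [Matrix.of_apply]
  have hinner : ∀ p ∈ Finset.range (d + 1),
      (∑ q ∈ Finset.range (d + 1),
        if p < q ∧ p ≤ min i.val j.val ∧ p + q = i.val + j.val + 1 then
          f p * g q - f q * g p else 0)
      = if p ≤ min i.val j.val then
          f p * g (i.val + j.val + 1 - p) - f (i.val + j.val + 1 - p) * g p else 0 := by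
    intro p hp
    rw [Finset.mem_range] at hp
    by_cases hpm : p ≤ min i.val j.val
    · by_cases hqd : i.val + j.val + 1 - p ≤ d
      · rw [Finset.sum_eq_single_of_mem (i.val + j.val + 1 - p)
          (Finset.mem_range.mpr (by omega))]
        · rw [if_pos ⟨by omega, hpm, by omega⟩, if_pos hpm]
        · intro q hq hqne
          rw [if_neg]
          rintro ⟨-, -, h3⟩
          exact hqne (by omega)
      · rw [if_pos hpm, hf (i.val + j.val + 1 - p) (by omega),
          hg (i.val + j.val + 1 - p) (by omega)]
        rw [Finset.sum_eq_zero]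
        · ring
        · intro q hq
          rw [Finset.mem_range] at hq
          rw [if_neg]
          rintro ⟨-, -, h3⟩
          omega
    · rw [if_neg hpm]
      refine Finset.sum_eq_zero fun q hq => ?_
      rw [if_neg]
      rintro ⟨-, h2, -⟩
      exact hpm h2
  rw [Finset.sum_congr rfl hinner]
  unfold abar
  have hsub : Finset.range (min i.val j.val + 1) ⊆ Finset.range (d + 1) := by
    intro p hp
    rw [Finset.mem_range] at hp ⊢
    omega
  rw [← Finset.sum_subset hsub (fun p hp hpn => by
    rw [Finset.mem_range] at hp hpn
    rw [if_neg (by omega)])]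
  refine Finset.sum_congr rfl fun p hp => ?_
  rw [Finset.mem_range] at hp
  rw [if_pos (by omega)]


include hf hg in
lemma det_eq_zero_of_root (hd : 1 ≤ d) (hfd : f d = 1) (hgd : g d = 0) (μ : K)
    (hF : ∑ i ∈ Finset.range (d + 1), f i * μ ^ i = 0)
    (hG : ∑ i ∈ Finset.range (d + 1), g i * μ ^ i = 0) :
    (bezoutMatrix d f g).det = 0 := by
  obtain ⟨n, rfl⟩ : ∃ n, d = n + 1 := ⟨d - 1, by omega⟩
  have hlast : ∀ u, u ≤ n + 1 → abar f g u n = -g u := by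
    intro u hu
    have := abar_lastcol hf hg hfd hgd u hu (by omega)
    simpa using this
  have hrow0 : ∀ u : ℕ, abar f g u 0 = f 0 * g (u + 1) - f (u + 1) * g 0 := fun u => by
    rw [abar_symm, abar_row0]
  have hSf : ∑ j ∈ Finset.range n, f (j + 1) * μ ^ (j + 1) = -(f 0) - μ ^ (n + 1) := by
    have h1 : (0 : K) = (∑ j ∈ Finset.range n, f (j + 1) * μ ^ (j + 1)) + f 0 * μ ^ 0
        + f (n + 1) * μ ^ (n + 1) := by
      rw [← hF, Finset.sum_range_succ, Finset.sum_range_succ']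
    rw [hfd] at h1
    linear_combination -h1
  have hSg : ∑ j ∈ Finset.range n, g (j + 1) * μ ^ (j + 1) = -(g 0) := by
    have h1 : (0 : K) = (∑ j ∈ Finset.range n, g (j + 1) * μ ^ (j + 1)) + g 0 * μ ^ 0
        + g (n + 1) * μ ^ (n + 1) := by
      rw [← hG, Finset.sum_range_succ, Finset.sum_range_succ']
    rw [hgd] at h1
    linear_combination -h1
  have hcd : ∀ u, n + 1 ≤ u → (∑ j ∈ Finset.range (n + 1), abar f g u j * μ ^ j) = 0 :=
    fun u hu => Finset.sum_eq_zero fun j hj => by rw [abar_vanish hf hg u j hu]; ring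
  have hrec : ∀ u, u < n + 1 →
      (∑ j ∈ Finset.range (n + 1), abar f g u j * μ ^ j)
        = μ * ∑ j ∈ Finset.range (n + 1), abar f g (u + 1) j * μ ^ j := by
    intro u hu
    have h2 : ∀ j ∈ Finset.range n, abar f g u (j + 1) * μ ^ (j + 1)
        = abar f g (u + 1) j * μ ^ j * μ
          + ((f (j + 1) * μ ^ (j + 1)) * g (u + 1) - f (u + 1) * (g (j + 1) * μ ^ (j + 1))) :=
      fun j hj => by rw [abar_key]; ring
    rw [Finset.sum_range_succ' (fun j => abar f g u j * μ ^ j) n]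
    rw [Finset.sum_congr rfl h2, Finset.sum_add_distrib, Finset.sum_sub_distrib,
      ← Finset.sum_mul, ← Finset.sum_mul, ← Finset.mul_sum]
    rw [Finset.sum_range_succ (fun j => abar f g (u + 1) j * μ ^ j) n]
    rw [hlast (u + 1) (by omega), hrow0 u, hSf, hSg]
    ring
  have hall : ∀ k u, n + 1 ≤ u + k → (∑ j ∈ Finset.range (n + 1), abar f g u j * μ ^ j) = 0 := by
    intro k
    induction k with
    | zero => intro u hu; exact hcd u (by omega)
    | succ k ih =>
      intro u hu
      by_cases h : n + 1 ≤ u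
      · exact hcd u h
      · rw [hrec u (by omega), ih (u + 1) (by omega), mul_zero]
  rw [← Matrix.exists_mulVec_eq_zero_iff]
  refine ⟨fun j => μ ^ (j : ℕ), ?_, ?_⟩
  · intro h0
    have h1 := congrFun h0 ⟨0, by omega⟩
    simp at h1
  · funext i
    have : ∀ j : Fin (n + 1), bezoutMatrix (n + 1) f g i j * μ ^ (j : ℕ)
        = abar f g i.val j.val * μ ^ (j : ℕ) := fun j => by rw [bez_entry hf hg]
    simp only [Matrix.mulVec, dotProduct, Pi.zero_apply]
    rw [Finset.sum_congr rfl fun j _ => this j]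
    rw [Fin.sum_univ_eq_sum_range (fun j => abar f g i.val j * μ ^ j) (n + 1)]
    exact hall (n + 1) i.val (by omega)
/-- `ab1 f g u m` is `abar f g (u-1) m`, with the convention that row `-1` is zero. -/
def ab1 (f g : ℕ → K) (u m : ℕ) : K := if u = 0 then 0 else abar f g (u - 1) m

lemma abar_keyU (f g : ℕ → K) (u k : ℕ) :
    abar f g u k = ab1 f g u (k + 1) - f (k + 1) * g u + f u * g (k + 1) := by
  unfold ab1
  rcases u with _ | u'
  · rw [if_pos rfl, abar_row0]
    ring
  · rw [if_neg (Nat.succ_ne_zero u')]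
    simp only [Nat.add_sub_cancel]
    have h := abar_key f g u' k
    linear_combination -h

lemma ab1_col0 (f g : ℕ → K) (u : ℕ) :
    ab1 f g u 0 = f 0 * g u - f u * g 0 := by
  unfold ab1
  rcases u with _ | u'
  · rw [if_pos rfl, sub_self]
  · rw [if_neg (Nat.succ_ne_zero u')]
    simp only [Nat.add_sub_cancel]
    rw [abar_symm, abar_row0]

/-- The "multiplication by X modulo F" map on coefficient (column) vectors. -/
def shiftMap (d : ℕ) (f : ℕ → K) : (Fin d → K) →ₗ[K] (Fin d → K) where
  toFun v := fun i => if h : (i : ℕ) + 1 < d then v ⟨(i : ℕ) + 1, h⟩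
    else -∑ k : Fin d, f (k : ℕ) * v k
  map_add' x y := by
    funext i
    by_cases h : (i : ℕ) + 1 < d
    · simp [h]
    · simp only [dif_neg h, Pi.add_apply, mul_add, Finset.sum_add_distrib]
      ring
  map_smul' c x := by
    funext i
    by_cases h : (i : ℕ) + 1 < d
    · simp [h]
    · simp only [dif_neg h, Pi.smul_apply, smul_eq_mul, RingHom.id_apply, Finset.mul_sum]
      rw [mul_neg, Finset.mul_sum]
      exact neg_inj.mpr (Finset.sum_congr rfl fun k _ => by ring)

def truncVec (d : ℕ) (v : Fin d → K) : ℕ → K := fun k => if h : k < d then v ⟨k, h⟩ else 0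

lemma truncVec_lt {d : ℕ} (v : Fin d → K) (k : ℕ) (h : k < d) :
    truncVec d v k = v ⟨k, h⟩ := dif_pos h

lemma truncVec_fin {d : ℕ} (v : Fin d → K) (k : Fin d) : truncVec d v (k : ℕ) = v k := by
  rw [truncVec_lt v _ k.isLt, Fin.eta]

lemma shiftMap_apply_lt (d : ℕ) (f : ℕ → K) (v : Fin d → K) (i : Fin d)
    (h : (i : ℕ) + 1 < d) : shiftMap d f v i = v ⟨(i : ℕ) + 1, h⟩ := by
  simp only [shiftMap, LinearMap.coe_mk, AddHom.coe_mk]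
  exact dif_pos h

lemma shiftMap_apply_last (d : ℕ) (f : ℕ → K) (v : Fin d → K) (i : Fin d)
    (h : ¬((i : ℕ) + 1 < d)) : shiftMap d f v i = -∑ k : Fin d, f (k : ℕ) * v k := by
  simp only [shiftMap, LinearMap.coe_mk, AddHom.coe_mk]
  exact dif_neg h

include hf hg in
lemma mulVec_abar (v : Fin d → K) (u : ℕ) (hu : u < d) :
    (bezoutMatrix d f g).mulVec v ⟨u, hu⟩
      = ∑ k ∈ Finset.range d, abar f g u k * truncVec d v k := by
  simp only [Matrix.mulVec, dotProduct]
  rw [← Fin.sum_univ_eq_sum_range (fun k => abar f g u k * truncVec d v k) d]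
  refine Finset.sum_congr rfl fun k _ => ?_
  rw [bez_entry hf hg, truncVec_fin]

include hf hg in
lemma mulVec_shiftMap (hfd : f d = 1) (hgd : g d = 0) (v : Fin d → K)
    (hv : (bezoutMatrix d f g).mulVec v = 0) (hd : 1 ≤ d) :
    (bezoutMatrix d f g).mulVec (shiftMap d f v) = 0 := by
  obtain ⟨n, rfl⟩ : ∃ n, d = n + 1 := ⟨d - 1, by omega⟩
  have hlast : ∀ u, u ≤ n + 1 → abar f g u n = -g u := by
    intro u hu
    have := abar_lastcol hf hg hfd hgd u hu (by omega)
    simpa using this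
  have hv' : ∀ u, u < n + 1 →
      ∑ k ∈ Finset.range (n + 1), abar f g u k * truncVec (n + 1) v k = 0 := by
    intro u hu
    have h1 := mulVec_abar hf hg v u hu
    rw [hv] at h1
    simpa using h1.symm
  have hγ : ∑ k ∈ Finset.range (n + 1), g k * truncVec (n + 1) v k = 0 := by
    have h1 := hv' n (by omega)
    have h2 : ∀ k ∈ Finset.range (n + 1), abar f g n k * truncVec (n + 1) v k
        = -(g k * truncVec (n + 1) v k) := by
      intro k hk
      rw [Finset.mem_range] at hk
      rw [abar_symm, hlast k (by omega)]
      ring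
    rw [Finset.sum_congr rfl h2, Finset.sum_neg_distrib] at h1
    exact neg_eq_zero.mp h1
  have htv : ∀ k, k < n + 1 → truncVec (n + 1) (shiftMap (n + 1) f v) k
      = if k + 1 < n + 1 then truncVec (n + 1) v (k + 1)
        else -(∑ m ∈ Finset.range (n + 1), f m * truncVec (n + 1) v m) := by
    intro k hk
    rw [truncVec_lt _ _ hk]
    by_cases h : k + 1 < n + 1
    · rw [if_pos h, shiftMap_apply_lt (n + 1) f v ⟨k, hk⟩ h, truncVec_lt _ _ h]
    · rw [if_neg h, shiftMap_apply_last (n + 1) f v ⟨k, hk⟩ h]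
      rw [show (∑ k : Fin (n + 1), f (k : ℕ) * v k)
          = ∑ m ∈ Finset.range (n + 1), f m * truncVec (n + 1) v m from by
        rw [← Fin.sum_univ_eq_sum_range (fun m => f m * truncVec (n + 1) v m) (n + 1)]
        exact Finset.sum_congr rfl fun k _ => by rw [truncVec_fin]]
  funext i
  rw [show i = ⟨(i : ℕ), i.isLt⟩ from (Fin.eta i i.isLt).symm]
  rw [mulVec_abar hf hg _ (i : ℕ) i.isLt]
  have hu : (i : ℕ) < n + 1 := i.isLt
  set u := (i : ℕ) with hu'
  show ∑ k ∈ Finset.range (n + 1), abar f g u k * truncVec (n + 1) (shiftMap (n + 1) f v) k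
      = (0 : Fin (n + 1) → K) ⟨u, hu⟩
  rw [Finset.sum_congr rfl (fun k hk => by
    rw [htv k (Finset.mem_range.mp hk)])]
  rw [Finset.sum_range_succ, if_neg (Nat.lt_irrefl (n + 1))]
  have hsplit : ∀ k ∈ Finset.range n,
      abar f g u k * (if k + 1 < n + 1 then truncVec (n + 1) v (k + 1)
        else -(∑ m ∈ Finset.range (n + 1), f m * truncVec (n + 1) v m))
      = ab1 f g u (k + 1) * truncVec (n + 1) v (k + 1)
        - (f (k + 1) * truncVec (n + 1) v (k + 1)) * g u
        + f u * (g (k + 1) * truncVec (n + 1) v (k + 1)) := by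
    intro k hk
    rw [Finset.mem_range] at hk
    rw [if_pos (by omega), abar_keyU]
    ring
  rw [Finset.sum_congr rfl hsplit, Finset.sum_add_distrib, Finset.sum_sub_distrib,
    ← Finset.sum_mul, ← Finset.mul_sum]
  have P1 : ∑ k ∈ Finset.range n, ab1 f g u (k + 1) * truncVec (n + 1) v (k + 1)
      = -(ab1 f g u 0 * truncVec (n + 1) v 0) := by
    have h0 : ∑ m ∈ Finset.range (n + 1), ab1 f g u m * truncVec (n + 1) v m = 0 := by
      rcases u with _ | u'
      · refine Finset.sum_eq_zero fun m hm => ?_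
        unfold ab1
        rw [if_pos rfl, zero_mul]
      · have heq : ∀ m ∈ Finset.range (n + 1), ab1 f g (u' + 1) m * truncVec (n + 1) v m
            = abar f g u' m * truncVec (n + 1) v m := by
          intro m hm
          unfold ab1
          rw [if_neg (Nat.succ_ne_zero u')]
          simp only [Nat.add_sub_cancel]
        rw [Finset.sum_congr rfl heq]
        exact hv' u' (by omega)
    have h2 := Finset.sum_range_succ' (fun m => ab1 f g u m * truncVec (n + 1) v m) n
    rw [h0] at h2
    linear_combination -h2
  have P2 : ∑ k ∈ Finset.range n, f (k + 1) * truncVec (n + 1) v (k + 1)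
      = (∑ m ∈ Finset.range (n + 1), f m * truncVec (n + 1) v m)
        - f 0 * truncVec (n + 1) v 0 := by
    have h2 := Finset.sum_range_succ' (fun m => f m * truncVec (n + 1) v m) n
    linear_combination -h2
  have P3 : ∑ k ∈ Finset.range n, g (k + 1) * truncVec (n + 1) v (k + 1)
      = -(g 0 * truncVec (n + 1) v 0) := by
    have h2 := Finset.sum_range_succ' (fun m => g m * truncVec (n + 1) v m) n
    rw [hγ] at h2
    linear_combination -h2
  rw [P1, P2, P3, hlast u (by omega), ab1_col0]
  show _ = (0 : K)
  ring

include hf hg in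
lemma root_of_det_eq_zero [IsAlgClosed K] (hd : 1 ≤ d) (hfd : f d = 1) (hgd : g d = 0)
    (hdet : (bezoutMatrix d f g).det = 0) :
    ∃ μ : K, (∑ i ∈ Finset.range (d + 1), f i * μ ^ i = 0)
      ∧ (∑ i ∈ Finset.range (d + 1), g i * μ ^ i = 0) := by
  obtain ⟨n, rfl⟩ : ∃ n, d = n + 1 := ⟨d - 1, by omega⟩
  have hlast : ∀ u, u ≤ n + 1 → abar f g u n = -g u := by
    intro u hu
    have := abar_lastcol hf hg hfd hgd u hu (by omega)
    simpa using this
  obtain ⟨v, hvne, hv⟩ := Matrix.exists_mulVec_eq_zero_iff.mpr hdet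
  set W := LinearMap.ker (Matrix.mulVecLin (bezoutMatrix (n + 1) f g)) with hW
  have hvW : v ∈ W := by
    rw [hW, LinearMap.mem_ker, Matrix.mulVecLin_apply]
    exact hv
  have hinv : ∀ x ∈ W, shiftMap (n + 1) f x ∈ W := by
    intro x hx
    rw [hW, LinearMap.mem_ker, Matrix.mulVecLin_apply] at hx ⊢
    exact mulVec_shiftMap hf hg hfd hgd x hx (by omega)
  haveI : Nontrivial W := by
    refine nontrivial_of_ne ⟨v, hvW⟩ 0 ?_
    intro h
    exact hvne (congrArg Subtype.val h)
  obtain ⟨μ, hμ⟩ := Module.End.exists_eigenvalue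
    ((shiftMap (n + 1) f).restrict hinv : Module.End K W)
  obtain ⟨w, hw⟩ := hμ.exists_hasEigenvector
  have hweq := hw.apply_eq_smul
  have hcoe : shiftMap (n + 1) f (w : Fin (n + 1) → K) = μ • (w : Fin (n + 1) → K) := by
    have h1 := congrArg Subtype.val hweq
    rwa [LinearMap.restrict_apply] at h1
  have hwmem : (bezoutMatrix (n + 1) f g).mulVec (w : Fin (n + 1) → K) = 0 := by
    have h := LinearMap.mem_ker.mp w.2
    rwa [Matrix.mulVecLin_apply] at h
  set wv : Fin (n + 1) → K := (w : Fin (n + 1) → K) with hwv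
  have hstep : ∀ (i : ℕ) (h : i + 1 < n + 1), wv ⟨i + 1, h⟩ = μ * wv ⟨i, by omega⟩ := by
    intro i h
    have h1 := congrFun hcoe ⟨i, by omega⟩
    rw [shiftMap_apply_lt (n + 1) f wv ⟨i, by omega⟩ h] at h1
    rw [h1, Pi.smul_apply, smul_eq_mul]
  have hpow : ∀ (i : ℕ) (h : i < n + 1), wv ⟨i, h⟩ = wv ⟨0, n.succ_pos⟩ * μ ^ i := by
    intro i
    induction i with
    | zero => intro h; rw [pow_zero, mul_one]
    | succ i ih =>
      intro h
      rw [hstep i h, ih (by omega)]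
      ring
  have hwvne : wv ≠ 0 := by
    intro h0
    exact hw.2 (Subtype.ext h0)
  have hw0 : wv ⟨0, n.succ_pos⟩ ≠ 0 := by
    intro h0
    apply hwvne
    funext j
    rcases j with ⟨j, hj⟩
    rw [hpow j hj, h0, zero_mul, Pi.zero_apply]
  have hwvk : ∀ k : Fin (n + 1), wv k = wv ⟨0, n.succ_pos⟩ * μ ^ (k : ℕ) :=
    fun k => (congrArg wv (Fin.eta k k.isLt)).symm.trans (hpow k k.isLt)
  refine ⟨μ, ?_, ?_⟩
  · -- F(μ) = 0, from the last row of the eigen identity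
    have h1 := congrFun hcoe ⟨n, by omega⟩
    rw [shiftMap_apply_last (n + 1) f wv ⟨n, by omega⟩ (Nat.lt_irrefl (n + 1))] at h1
    rw [Pi.smul_apply, smul_eq_mul] at h1
    rw [Finset.sum_congr rfl (fun k _ => by rw [hwvk k])] at h1
    rw [show wv ⟨n, by omega⟩ = wv ⟨0, n.succ_pos⟩ * μ ^ n from hpow n (by omega)] at h1
    rw [Fin.sum_univ_eq_sum_range (fun k => f k * (wv ⟨0, n.succ_pos⟩ * μ ^ k)) (n + 1)] at h1
    have h3 : ∑ k ∈ Finset.range (n + 1), f k * (wv ⟨0, n.succ_pos⟩ * μ ^ k)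
        = wv ⟨0, n.succ_pos⟩ * ∑ k ∈ Finset.range (n + 1), f k * μ ^ k := by
      rw [Finset.mul_sum]
      exact Finset.sum_congr rfl fun k _ => by ring
    rw [h3] at h1
    have h5 : wv ⟨0, n.succ_pos⟩
        * ((∑ k ∈ Finset.range (n + 1), f k * μ ^ k) + μ ^ (n + 1)) = 0 := by
      linear_combination -h1
    rcases mul_eq_zero.mp h5 with h6 | h6
    · exact absurd h6 hw0
    · rw [Finset.sum_range_succ, hfd]
      linear_combination h6
  · -- G(μ) = 0, from the last row of the kernel membership
    have h1 := congrFun hwmem ⟨n, by omega⟩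
    rw [mulVec_abar hf hg wv n (by omega)] at h1
    have h2 : ∀ k ∈ Finset.range (n + 1), abar f g n k * truncVec (n + 1) wv k
        = -(g k * (wv ⟨0, n.succ_pos⟩ * μ ^ k)) := by
      intro k hk
      rw [Finset.mem_range] at hk
      rw [abar_symm, hlast k (by omega), truncVec_lt wv k hk, hpow k hk]
      ring
    rw [Finset.sum_congr rfl h2, Finset.sum_neg_distrib] at h1
    have h3 : ∀ k ∈ Finset.range (n + 1), g k * (wv ⟨0, n.succ_pos⟩ * μ ^ k)
        = wv ⟨0, n.succ_pos⟩ * (g k * μ ^ k) := fun k _ => by ring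
    rw [Finset.sum_congr rfl h3, ← Finset.mul_sum] at h1
    have h4 : wv ⟨0, n.succ_pos⟩ * ∑ k ∈ Finset.range (n + 1), g k * μ ^ k = 0 :=
      neg_eq_zero.mp h1
    rcases mul_eq_zero.mp h4 with h6 | h6
    · exact absurd h6 hw0
    · rw [Finset.sum_range_succ, hgd]
      linear_combination h6

end Truncated

lemma bez_swap (d : ℕ) (f g : ℕ → K) : bezoutMatrix d g f = -bezoutMatrix d f g := by
  ext i j
  simp only [bezoutMatrix, Matrix.of_apply, Matrix.neg_apply]
  rw [← Finset.sum_neg_distrib]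
  refine Finset.sum_congr rfl fun p _ => ?_
  rw [← Finset.sum_neg_distrib]
  refine Finset.sum_congr rfl fun q _ => ?_
  split_ifs with h
  · ring
  · rw [neg_zero]

lemma det_swap_zero_iff (d : ℕ) (f g : ℕ → K) :
    (bezoutMatrix d f g).det = 0 ↔ (bezoutMatrix d g f).det = 0 := by
  rw [bez_swap d f g, Matrix.det_neg, Fintype.card_fin]
  have h : ((-1 : K) ^ d) ≠ 0 := pow_ne_zero d (by norm_num)
  constructor
  · intro h0; rw [h0, mul_zero]
  · intro h0; exact (mul_eq_zero.mp h0).resolve_left h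

lemma bez_scale_shear (d : ℕ) (f g : ℕ → K) (a c : K) :
    bezoutMatrix d (fun k => a * f k) (fun k => g k + c * f k) = a • bezoutMatrix d f g := by
  ext i j
  simp only [bezoutMatrix, Matrix.of_apply, Matrix.smul_apply, smul_eq_mul]
  rw [Finset.mul_sum]
  refine Finset.sum_congr rfl fun p _ => ?_
  rw [Finset.mul_sum]
  refine Finset.sum_congr rfl fun q _ => ?_
  split_ifs with h
  · ring
  · rw [mul_zero]

lemma bez_congr (d : ℕ) (f f' g g' : ℕ → K) (hf : ∀ k, k ≤ d → f k = f' k)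
    (hg : ∀ k, k ≤ d → g k = g' k) : bezoutMatrix d f g = bezoutMatrix d f' g' := by
  ext i j
  simp only [bezoutMatrix, Matrix.of_apply]
  refine Finset.sum_congr rfl fun p hp => Finset.sum_congr rfl fun q hq => ?_
  rw [Finset.mem_range] at hp hq
  split_ifs with h
  · rw [hf p (by omega), hf q (by omega), hg p (by omega), hg q (by omega)]
  · rfl

lemma main_ne [IsAlgClosed K] (d : ℕ) (hd : 1 ≤ d) (f g : ℕ → K) (hfd : f d ≠ 0) :
    (bezoutMatrix d f g).det = 0 ↔ ∃ μ : K,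
      (∑ i ∈ Finset.range (d + 1), f i * μ ^ i = 0)
        ∧ (∑ i ∈ Finset.range (d + 1), g i * μ ^ i = 0) := by
  set a := (f d)⁻¹ with ha'
  set c := -(g d * (f d)⁻¹) with hc'
  set f' : ℕ → K := fun k => if k ≤ d then a * f k else 0 with hf'
  set g' : ℕ → K := fun k => if k ≤ d then g k + c * f k else 0 with hg'
  have ha : a ≠ 0 := inv_ne_zero hfd
  have hf'trunc : ∀ k, d < k → f' k = 0 := fun k hk => if_neg (by omega)
  have hf'd : f' d = 1 := by
    rw [hf']
    simp only [le_refl, if_true]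
    exact inv_mul_cancel₀ hfd
  have hg'trunc : ∀ k, d ≤ k → g' k = 0 := by
    intro k hk
    rcases eq_or_lt_of_le hk with rfl | h
    · rw [hg']
      simp only [le_refl, if_true, hc']
      field_simp
      ring
    · exact if_neg (by omega)
  have hmat : bezoutMatrix d f' g' = a • bezoutMatrix d f g := by
    rw [show bezoutMatrix d f' g'
        = bezoutMatrix d (fun k => a * f k) (fun k => g k + c * f k) from
      bez_congr d f' (fun k => a * f k) g' (fun k => g k + c * f k)
        (fun k hk => by rw [hf']; simp only [if_pos hk])
        (fun k hk => by rw [hg']; simp only [if_pos hk])]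
    exact bez_scale_shear d f g a c
  have hdet2 : (bezoutMatrix d f' g').det = a ^ d * (bezoutMatrix d f g).det := by
    rw [hmat, Matrix.det_smul, Fintype.card_fin]
  have eF : ∀ μ : K, ∑ i ∈ Finset.range (d + 1), f' i * μ ^ i
      = a * ∑ i ∈ Finset.range (d + 1), f i * μ ^ i := by
    intro μ
    rw [Finset.mul_sum]
    refine Finset.sum_congr rfl fun i hi => ?_
    rw [Finset.mem_range] at hi
    rw [hf']
    simp only [if_pos (by omega : i ≤ d)]
    ring
  have eG : ∀ μ : K, ∑ i ∈ Finset.range (d + 1), g' i * μ ^ i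
      = (∑ i ∈ Finset.range (d + 1), g i * μ ^ i)
        + c * ∑ i ∈ Finset.range (d + 1), f i * μ ^ i := by
    intro μ
    rw [Finset.mul_sum, ← Finset.sum_add_distrib]
    refine Finset.sum_congr rfl fun i hi => ?_
    rw [Finset.mem_range] at hi
    rw [hg']
    simp only [if_pos (by omega : i ≤ d)]
    ring
  constructor
  · intro h0
    have h1 : (bezoutMatrix d f' g').det = 0 := by rw [hdet2, h0, mul_zero]
    obtain ⟨μ, hF', hG'⟩ := root_of_det_eq_zero hf'trunc hg'trunc hd hf'd
      (hg'trunc d le_rfl) h1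
    rw [eF] at hF'
    rw [eG] at hG'
    have hF : ∑ i ∈ Finset.range (d + 1), f i * μ ^ i = 0 :=
      (mul_eq_zero.mp hF').resolve_left ha
    refine ⟨μ, hF, ?_⟩
    rw [hF, mul_zero, add_zero] at hG'
    exact hG'
  · rintro ⟨μ, hF, hG⟩
    have h1 : (bezoutMatrix d f' g').det = 0 := by
      refine det_eq_zero_of_root hf'trunc hg'trunc hd hf'd (hg'trunc d le_rfl) μ ?_ ?_
      · rw [eF, hF, mul_zero]
      · rw [eG, hF, hG, mul_zero, add_zero]
    rw [hdet2] at h1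
    exact (mul_eq_zero.mp h1).resolve_left (pow_ne_zero d ha)

lemma eval_at_zero (d : ℕ) (hd : 1 ≤ d) (f : ℕ → K) (t : K) :
    ∑ i ∈ Finset.range (d + 1), f i * (0 : K) ^ (d - i) * t ^ i = f d * t ^ d := by
  rw [Finset.sum_eq_single_of_mem d (Finset.mem_range.mpr (by omega))]
  · rw [Nat.sub_self, pow_zero, mul_one]
  · intro i hi hne
    rw [Finset.mem_range] at hi
    rw [zero_pow (by omega : d - i ≠ 0), mul_zero, zero_mul]

lemma eval_scale (d : ℕ) (f : ℕ → K) (s t : K) (hs : s ≠ 0) :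
    ∑ i ∈ Finset.range (d + 1), f i * s ^ (d - i) * t ^ i
      = s ^ d * ∑ i ∈ Finset.range (d + 1), f i * (t * s⁻¹) ^ i := by
  rw [Finset.mul_sum]
  refine Finset.sum_congr rfl fun i hi => ?_
  rw [Finset.mem_range] at hi
  have h1 : s ^ d = s ^ (d - i) * s ^ i := by
    rw [← pow_add]
    congr 1
    omega
  have h2 : s ^ i ≠ 0 := pow_ne_zero i hs
  rw [h1, mul_pow]
  field_simp
  have h3 : s ^ i * s⁻¹ ^ i = 1 := by rw [← mul_pow, mul_inv_cancel₀ hs, one_pow]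
  linear_combination (-(f i * t ^ i)) * h3

lemma eval_at_one (d : ℕ) (f : ℕ → K) (μ : K) :
    ∑ i ∈ Finset.range (d + 1), f i * (1 : K) ^ (d - i) * μ ^ i
      = ∑ i ∈ Finset.range (d + 1), f i * μ ^ i := by
  refine Finset.sum_congr rfl fun i _ => ?_
  rw [one_pow, mul_one]

end BezoutChow


/-- **The Bézout determinant is the Chow form of the rational normal curve:**
for binary forms `F, G` of degree `d ≥ 1` over an algebraically closed field,
the determinant of their Bézout matrix vanishes iff `F` and `G` have a common
projective zero. -/
theorem bezout_det_eq_zero_iff_common_zero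
    {K : Type*} [Field K] [IsAlgClosed K] (d : ℕ) (hd : 1 ≤ d) (f g : ℕ → K) :
    (bezoutMatrix d f g).det = 0
    ↔ ∃ s t : K, (s, t) ≠ (0, 0) ∧
        ∑ i ∈ Finset.range (d + 1), f i * s ^ (d - i) * t ^ i = 0 ∧
        ∑ i ∈ Finset.range (d + 1), g i * s ^ (d - i) * t ^ i = 0 := by
  classical
  have hproj : (∃ s t : K, (s, t) ≠ (0, 0) ∧
        (∑ i ∈ Finset.range (d + 1), f i * s ^ (d - i) * t ^ i = 0) ∧
        (∑ i ∈ Finset.range (d + 1), g i * s ^ (d - i) * t ^ i = 0))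
      ↔ ((f d = 0 ∧ g d = 0) ∨ ∃ μ : K,
        (∑ i ∈ Finset.range (d + 1), f i * μ ^ i = 0)
          ∧ (∑ i ∈ Finset.range (d + 1), g i * μ ^ i = 0)) := by
    constructor
    · rintro ⟨s, t, hne, hFs, hGs⟩
      by_cases hs : s = 0
      · subst hs
        have ht : t ≠ 0 := fun h => hne (by rw [h])
        rw [BezoutChow.eval_at_zero d hd f t] at hFs
        rw [BezoutChow.eval_at_zero d hd g t] at hGs
        left
        exact ⟨(mul_eq_zero.mp hFs).resolve_right (pow_ne_zero d ht),
          (mul_eq_zero.mp hGs).resolve_right (pow_ne_zero d ht)⟩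
      · right
        rw [BezoutChow.eval_scale d f s t hs] at hFs
        rw [BezoutChow.eval_scale d g s t hs] at hGs
        exact ⟨t * s⁻¹, (mul_eq_zero.mp hFs).resolve_left (pow_ne_zero d hs),
          (mul_eq_zero.mp hGs).resolve_left (pow_ne_zero d hs)⟩
    · rintro (⟨h1, h2⟩ | ⟨μ, h1, h2⟩)
      · refine ⟨0, 1, by simp, ?_, ?_⟩
        · rw [BezoutChow.eval_at_zero d hd f 1, h1, zero_mul]
        · rw [BezoutChow.eval_at_zero d hd g 1, h2, zero_mul]
      · refine ⟨1, μ, by simp, ?_, ?_⟩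
        · rw [BezoutChow.eval_at_one d f μ]; exact h1
        · rw [BezoutChow.eval_at_one d g μ]; exact h2
  rw [hproj]
  by_cases hfd : f d = 0
  · by_cases hgd : g d = 0
    · constructor
      · intro _
        exact Or.inl ⟨hfd, hgd⟩
      · intro _
        apply Matrix.det_eq_zero_of_row_eq_zero (⟨d - 1, by omega⟩ : Fin d)
        intro j
        simp only [bezoutMatrix, Matrix.of_apply]
        refine Finset.sum_eq_zero fun p hp => Finset.sum_eq_zero fun q hq => ?_
        rw [Finset.mem_range] at hp hq
        split_ifs with h
        · obtain ⟨h1, h2, h3⟩ := h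
          have hjd := j.isLt
          have hqd : q = d := by omega
          subst hqd
          rw [hfd, hgd]
          ring
        · rfl
    · rw [BezoutChow.det_swap_zero_iff d f g, BezoutChow.main_ne d hd g f hgd]
      constructor
      · rintro ⟨μ, h1, h2⟩
        exact Or.inr ⟨μ, h2, h1⟩
      · rintro (⟨h1, h2⟩ | ⟨μ, h1, h2⟩)
        · exact absurd h2 hgd
        · exact ⟨μ, h2, h1⟩
  · rw [BezoutChow.main_ne d hd f g hfd]
    constructor
    · intro h
      exact Or.inr h
    · rintro (⟨h1, _⟩ | h)
      · exact absurd h1 hfd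
      · exact h
end

section
/- Let K be a field, d ≥ 1, and let E be the exterior algebra of the (d+1)-dimensional K-vector space with basis y_0, y_1, …, y_d. Let B be the 2d×d matrix over E with entries B_{k,l} = y_{k−l} for 1 ≤ k ≤ 2d and 1 ≤ l ≤ d, where y_m := 0 whenever m < 0 or m > d. Let A be the d×d matrix over E with entries A_{l,j} = Σ y_p ∧ y_q, the sum over all pairs (p,q) with 0 ≤ p < q ≤ d, p < min(l,j) and p + q = l + j − 1, for 1 ≤ l, j ≤ d. Then the matrix product B·A (computed in the noncommutative ring E) is the zero 2d×d matrix. -/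
/-!
Put `y(s) = ∑ yₘ sᵐ`. The Bézout matrix is the coefficient matrix of the Bézoutian
`Bez(s, t) = y(t) y(s) / (s - t)`, and multiplying by the Sylvester matrix multiplies it by `y(s)`.
Hence `B·A` has generating function `y(s) y(t) y(s) / (s - t)`, which vanishes because
`y(s) y(t) y(s) = -y(s) y(s) y(t) = 0`. On coefficients, division by `s - t` becomes an induction
along antidiagonals: the `(k + 1, j)` and `(k, j + 1)` entries agree, and the `(0, j)` entry is 0.
-/

/-- The generator `y_m` of the exterior algebra `E = ∧(K^{d+1})` on the basis
`y_0, …, y_d`, extended by `y_m := 0` for `m > d` (and for out-of-range indices). -/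
noncomputable def extGen (K : Type*) [Field K] (d m : ℕ) :
    ExteriorAlgebra K (Fin (d + 1) → K) :=
  if h : m ≤ d then
    ExteriorAlgebra.ι K (Pi.single (⟨m, by omega⟩ : Fin (d + 1)) (1 : K))
  else 0

/-- The `2d × d` Sylvester-type matrix `B` over `E` with `B_{k,l} = y_{k−l}`
(1-indexed; `y_m = 0` for `m < 0` or `m > d`). -/
noncomputable def sylvesterExt (K : Type*) [Field K] (d : ℕ) :
    Matrix (Fin (2 * d)) (Fin d) (ExteriorAlgebra K (Fin (d + 1) → K)) :=
  Matrix.of fun k l =>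
    if l.val ≤ k.val then extGen K d (k.val - l.val) else 0

/-- The `d × d` Bézout-type matrix `A` over `E` with entries
`A_{l,j} = Σ y_p ∧ y_q` over `0 ≤ p < q ≤ d`, `p < min(l,j)`, `p + q = l + j − 1`
(1-indexed; here realized with 0-based `Fin d` indices). -/
noncomputable def bezoutExt (K : Type*) [Field K] (d : ℕ) :
    Matrix (Fin d) (Fin d) (ExteriorAlgebra K (Fin (d + 1) → K)) :=
  Matrix.of fun l j =>
    ∑ p ∈ Finset.range (d + 1), ∑ q ∈ Finset.range (d + 1),
      if p < q ∧ p ≤ min l.val j.val ∧ p + q = l.val + j.val + 1 then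
        extGen K d p * extGen K d q
      else 0

open Finset

namespace Bezout

variable {R : Type*} [Ring R] (y : ℕ → R)

/-- The coefficient of `sˡ tʲ` in the Bézoutian `y(t) y(s) / (s - t)`. -/
def coeff (l j : ℕ) : R :=
  ∑ p ∈ range (min l j + 1), y p * y (l + j + 1 - p)

/-- The coefficient of `sᵏ tʲ` in `y(s) · Bez(s, t)`. -/
def sylvesterMulCoeff (k j : ℕ) : R :=
  ∑ x ∈ antidiagonal k, y x.2 * coeff y x.1 j

variable {y}

@[simp]
lemma coeff_zero_left (j : ℕ) : coeff y 0 j = y 0 * y (j + 1) := by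
  simp [coeff]

lemma coeff_eq_zero_of_le {d l : ℕ} (hy : ∀ m, d < m → y m = 0) (hl : d ≤ l) (j : ℕ) :
    coeff y l j = 0 :=
  sum_eq_zero fun p hp => by
    rw [hy (l + j + 1 - p) (by simp at hp; omega), mul_zero]

lemma coeff_succ_right (hsq : ∀ a, y a * y a = 0) (hanti : ∀ a b, y a * y b + y b * y a = 0)
    (l j : ℕ) : coeff y l (j + 1) = coeff y (l + 1) j + y (j + 1) * y (l + 1) := by
  have hidx : l + (j + 1) = l + 1 + j := by ring
  rcases lt_trichotomy l j with h | rfl | h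
  · rw [coeff, coeff, min_eq_left (by omega : l ≤ j + 1), min_eq_left (by omega : l + 1 ≤ j),
      sum_range_succ _ (l + 1), hidx, show l + 1 + j + 1 - (l + 1) = j + 1 by omega,
      add_assoc _ (y (l + 1) * y (j + 1)), hanti, add_zero]
  · rw [coeff, coeff, min_eq_left (by omega : l ≤ l + 1), min_eq_right (by omega : l ≤ l + 1),
      hidx, hsq, add_zero]
  · rw [coeff, coeff, min_eq_right (by omega : j + 1 ≤ l), min_eq_right (by omega : j ≤ l + 1),
      sum_range_succ _ (j + 1), hidx, show l + 1 + j + 1 - (j + 1) = l + 1 by omega]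

lemma sum_antidiagonal_mul_mul_eq_zero (hsq : ∀ a, y a * y a = 0)
    (hanti : ∀ a b, y a * y b + y b * y a = 0) (n c : ℕ) :
    ∑ x ∈ antidiagonal n, y x.2 * (y c * y x.1) = 0 := by
  have hswap (a b : ℕ) : y a * (y c * y b) = -(y a * y b) * y c := by
    rw [eq_neg_of_add_eq_zero_left (hanti c b), mul_neg, ← mul_assoc, neg_mul]
  refine sum_involution (fun x _ => x.swap) (fun x _ => ?_) (fun x _ hx hfix => hx ?_)
    (fun x hx => HasAntidiagonal.swap_mem_antidiagonal.mpr hx) (fun x _ => x.swap_swap)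
  · rw [Prod.fst_swap, Prod.snd_swap, hswap, hswap, ← add_mul, ← neg_add, hanti, neg_zero,
      zero_mul]
  · have hdiag : x.1 = x.2 := congrArg Prod.snd hfix
    rw [hdiag, hswap, hsq, neg_zero, zero_mul]

lemma sylvesterMulCoeff_zero_left (hsq : ∀ a, y a * y a = 0) (j : ℕ) :
    sylvesterMulCoeff y 0 j = 0 := by
  simp [sylvesterMulCoeff, ← mul_assoc, hsq]

lemma sylvesterMulCoeff_succ_left (hsq : ∀ a, y a * y a = 0)
    (hanti : ∀ a b, y a * y b + y b * y a = 0) (k j : ℕ) :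
    sylvesterMulCoeff y (k + 1) j = sylvesterMulCoeff y k (j + 1) := by
  have hsandwich := sum_antidiagonal_mul_mul_eq_zero hsq hanti (k + 1) (j + 1)
  rw [Nat.sum_antidiagonal_succ] at hsandwich
  have hcorner : y (k + 1) * (y 0 * y (j + 1)) = -(y (k + 1) * (y (j + 1) * y 0)) := by
    rw [eq_neg_of_add_eq_zero_left (hanti 0 (j + 1)), mul_neg]
  rw [sylvesterMulCoeff, sylvesterMulCoeff, Nat.sum_antidiagonal_succ]
  simp only [coeff_succ_right hsq hanti, coeff_zero_left, mul_add, sum_add_distrib]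
  rw [hcorner, eq_neg_of_add_eq_zero_right hsandwich, add_comm]

lemma sylvesterMulCoeff_eq_zero (hsq : ∀ a, y a * y a = 0)
    (hanti : ∀ a b, y a * y b + y b * y a = 0) (k j : ℕ) : sylvesterMulCoeff y k j = 0 := by
  induction k generalizing j with
  | zero => exact sylvesterMulCoeff_zero_left hsq j
  | succ k ih => rw [sylvesterMulCoeff_succ_left hsq hanti, ih]

end Bezout

section ExteriorGenerators

variable {K : Type*} [Field K] {d : ℕ}

lemma extGen_mul_self (m : ℕ) : extGen K d m * extGen K d m = 0 := by
  unfold extGen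
  split_ifs <;> simp

lemma extGen_mul_add_mul_swap (a b : ℕ) :
    extGen K d a * extGen K d b + extGen K d b * extGen K d a = 0 := by
  unfold extGen
  split_ifs <;> simp [ExteriorAlgebra.ι_add_mul_swap]

lemma extGen_eq_zero_of_lt {m : ℕ} (h : d < m) : extGen K d m = 0 :=
  dif_neg (by omega)

lemma bezoutExt_apply (l j : Fin d) :
    bezoutExt K d l j = Bezout.coeff (extGen K d) l j := by
  have hinner (p : ℕ) :
      ∑ q ∈ range (d + 1), (if p < q ∧ p ≤ min (l : ℕ) j ∧ p + q = l + j + 1 then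
          extGen K d p * extGen K d q else 0)
        = if p ≤ min (l : ℕ) j then extGen K d p * extGen K d (l + j + 1 - p) else 0 := by
    split_ifs with hp
    -- `p < q` is forced by `p ≤ min l j` and `p + q = l + j + 1`.
    · rw [sum_eq_single (l + j + 1 - p), if_pos (by omega)]
      · exact fun q _ hq => if_neg (by omega)
      · intro hq
        rw [mem_range] at hq
        rw [extGen_eq_zero_of_lt (m := l + j + 1 - p) (by omega), mul_zero, ite_self]
    · exact sum_eq_zero fun q _ => if_neg fun h => hp h.2.1
  rw [bezoutExt, Matrix.of_apply, Bezout.coeff, sum_congr rfl fun p _ => hinner p, ← sum_filter]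
  congr 1
  ext p
  simp only [mem_filter, mem_range]
  omega

lemma sylvesterExt_mul_bezoutExt_apply (k : Fin (2 * d)) (j : Fin d) :
    (sylvesterExt K d * bezoutExt K d) k j = Bezout.sylvesterMulCoeff (extGen K d) k j := by
  set f : ℕ → ExteriorAlgebra K (Fin (d + 1) → K) := fun l =>
    if l ≤ k then extGen K d (k - l) * Bezout.coeff (extGen K d) l j else 0
  have hf_of_le {l : ℕ} (hl : d ≤ l) : f l = 0 := by
    simp only [f]
    rw [Bezout.coeff_eq_zero_of_le (fun _ => extGen_eq_zero_of_lt) hl, mul_zero, ite_self]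
  have hf_of_gt {l : ℕ} (hl : k < l) : f l = 0 := by
    simp only [f]
    exact if_neg (by omega)
  calc (sylvesterExt K d * bezoutExt K d) k j
      = ∑ l ∈ range d, f l := by
        simp only [Matrix.mul_apply, sylvesterExt, Matrix.of_apply, bezoutExt_apply, ite_mul,
          zero_mul, f]
        exact Fin.sum_univ_eq_sum_range f d
    _ = ∑ l ∈ range (k + 1), f l := by
        rcases le_total d (k + 1) with h | h
        · exact sum_subset (range_subset_range.mpr h) fun l _ hl => hf_of_le (by simpa using hl)
        · exact (sum_subset (range_subset_range.mpr h) fun l _ hl =>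
            hf_of_gt (by simpa using hl)).symm
    _ = Bezout.sylvesterMulCoeff (extGen K d) k j := by
        rw [Bezout.sylvesterMulCoeff, Nat.sum_antidiagonal_eq_sum_range_succ
          (fun l a => extGen K d a * Bezout.coeff (extGen K d) l j)]
        exact sum_congr rfl fun l hl => if_pos (by simpa [Nat.lt_succ_iff] using hl)

end ExteriorGenerators

theorem sylvesterExt_mul_bezoutExt_eq_zero_general (K : Type*) [Field K] (d : ℕ) :
    sylvesterExt K d * bezoutExt K d = 0 := by
  ext k j
  rw [sylvesterExt_mul_bezoutExt_apply, Matrix.zero_apply]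
  exact Bezout.sylvesterMulCoeff_eq_zero extGen_mul_self extGen_mul_add_mul_swap k j

/-- **The key cancellation in the Tate resolution of `O_{P¹}(−1)`:**
the product `B·A` of the Sylvester-type matrix with the Bézout-type matrix over the
exterior algebra `E = ∧(K^{d+1})` is the zero `2d × d` matrix. -/
theorem sylvesterExt_mul_bezoutExt_eq_zero (K : Type*) [Field K] (d : ℕ) (hd : 1 ≤ d) :
    sylvesterExt K d * bezoutExt K d = 0 :=
  sylvesterExt_mul_bezoutExt_eq_zero_general K d
end

section
/- Let K be an algebraically closed field with char K ≠ 2 and let ρ₁, ρ₂, ρ₃ ∈ K be pairwise distinct. Let (a₀,a₁,a₂,b₀) and (c₀,c₁,c₂,d₀) be linearly independent vectors in K⁴, and for 0 ≤ i < j ≤ 3 let [ij] denote the 2×2 minor on columns i and j of the matrix [[a₀,a₁,a₂,b₀],[c₀,c₁,c₂,d₀]]. Let M be the 4×4 matrix with rows: Row 1: (−ρ₁ρ₂[13]−(ρ₁+ρ₂)[03], −ρ₁ρ₂[23]+[03], [01], [02]); Row 2: (−ρ₁ρ₂[23]+[03], (ρ₁+ρ₂)[23]+[13], [02], [12]); Row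 3: ([01], [02], ρ₃[13]+[03], ρ₃[23]); Row 4: ([02], [12], ρ₃[23], −[23]). Then det M = 0 if and only if the functions a₀+a₁x+a₂x²+b₀y and c₀+c₁x+c₂x²+d₀y have a common zero on the projective elliptic curve y² = (x−ρ₁)(x−ρ₂)(x−ρ₃), i.e. either there exist x, y ∈ K with y² = (x−ρ₁)(x−ρ₂)(x−ρ₃), a₀+a₁x+a₂x²+b₀y = 0 and c₀+c₁x+c₂x²+d₀y = 0, or a₂ = 0 and c₂ = 0 (the common zero being at the point at infinity). -/
/-- The 2×2 minor `[ij]` on columns `i`, `j` of the 2×4 matrix with rows `v`, `w`. -/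
def minor2 {K : Type*} [CommRing K] (v w : Fin 4 → K) (i j : Fin 4) : K :=
  v i * w j - v j * w i

private lemma det_fin_four' {K : Type*} [CommRing K] (a b c d e f g h i j k l m n o p : K) :
    Matrix.det !![a,b,c,d; e,f,g,h; i,j,k,l; m,n,o,p] =
      a*(f*(k*p-l*o) - g*(j*p-l*n) + h*(j*o-k*n))
      - b*(e*(k*p-l*o) - g*(i*p-l*m) + h*(i*o-k*m))
      + c*(e*(j*p-l*n) - f*(i*p-l*m) + h*(i*n-j*m))
      - d*(e*(j*o-k*n) - f*(i*o-k*m) + g*(i*n-j*m)) := by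
  simp [Matrix.det_succ_row_zero, Fin.sum_univ_succ, Fin.succAbove]
  ring

open Polynomial in
private lemma quartic_root {K : Type*} [Field K] [IsAlgClosed K]
    (n0 n1 n2 n3 n4 : K) (h : n4 ≠ 0) :
    ∃ x : K, n0 + n1*x + n2*x^2 + n3*x^3 + n4*x^4 = 0 := by
  have hdeg : (C n4 * X^4 + C n3 * X^3 + C n2 * X^2 + C n1 * X + C n0).degree = 4 := by
    compute_degree!
  obtain ⟨x, hx⟩ := IsAlgClosed.exists_root _ (by rw [hdeg]; decide)
  refine ⟨x, ?_⟩
  simp only [IsRoot, eval_add, eval_mul, eval_pow, eval_X, eval_C] at hx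
  linear_combination hx

open Polynomial in
private lemma quad_factor {K : Type*} [Field K] [IsAlgClosed K] (b c : K) :
    ∃ α β : K, b = -(α + β) ∧ c = α * β := by
  have hdeg : (X^2 + C b * X + C c).degree = 2 := by compute_degree!
  obtain ⟨α, hα⟩ := IsAlgClosed.exists_root _ (by rw [hdeg]; decide)
  simp only [IsRoot, eval_add, eval_mul, eval_pow, eval_X, eval_C] at hα
  exact ⟨α, -b - α, by ring, by linear_combination hα⟩

/-- Sylvester resultant (deg 2, deg 4), fully expanded. -/
private def sylDet {K : Type*} [CommRing K] (p0 p1 p2 n0 n1 n2 n3 n4 : K) : K :=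
  n0^2*p2^4 - n0*n1*p1*p2^3 + n1^2*p0*p2^3 - 2*n0*n2*p0*p2^3 + n0*n2*p1^2*p2^2
  - n1*n2*p0*p1*p2^2 + 3*n0*n3*p0*p1*p2^2 + n2^2*p0^2*p2^2 - 2*n1*n3*p0^2*p2^2
  - n0*n3*p1^3*p2 + n1*n3*p0*p1^2*p2 - 4*n0*n4*p0*p1^2*p2 - n2*n3*p0^2*p1*p2
  + 3*n1*n4*p0^2*p1*p2 + 2*n0*n4*p0^2*p2^2 + n3^2*p0^3*p2 - 2*n2*n4*p0^3*p2
  + n0*n4*p1^4 - n1*n4*p0*p1^3 + n2*n4*p0^2*p1^2 - n3*n4*p0^3*p1 + n4^2*p0^4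

private lemma sylDet_eq_zero_iff {K : Type*} [Field K] [IsAlgClosed K]
    (p0 p1 p2 n0 n1 n2 n3 n4 : K) :
    sylDet p0 p1 p2 n0 n1 n2 n3 n4 = 0 ↔
      (∃ x : K, p0 + p1*x + p2*x^2 = 0 ∧ n0 + n1*x + n2*x^2 + n3*x^3 + n4*x^4 = 0) ∨
      (p2 = 0 ∧ n4 = 0) := by
  by_cases hp2 : p2 = 0
  · by_cases hn4 : n4 = 0
    · constructor
      · intro _
        exact Or.inr ⟨hp2, hn4⟩
      · intro _
        rw [hp2, hn4]; simp only [sylDet]; ring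
    · have hfac : sylDet p0 p1 p2 n0 n1 n2 n3 n4
          = n4 * (n0*p1^4 - n1*p0*p1^3 + n2*p0^2*p1^2 - n3*p0^3*p1 + n4*p0^4) := by
        rw [hp2]; simp only [sylDet]; ring
      rw [hfac, mul_eq_zero]
      constructor
      · rintro (h | h)
        · exact absurd h hn4
        · by_cases hp1 : p1 = 0
          · have hp0 : p0 = 0 := by
              have h40 : n4 * p0^4 = 0 := by rw [hp1] at h; linear_combination h
              rcases mul_eq_zero.mp h40 with h' | h'
              · exact absurd h' hn4
              · exact pow_eq_zero_iff (by norm_num) |>.mp h'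
            obtain ⟨x, hx⟩ := quartic_root n0 n1 n2 n3 n4 hn4
            exact Or.inl ⟨x, by rw [hp0, hp1, hp2]; ring, hx⟩
          · refine Or.inl ⟨-p0/p1, by rw [hp2]; field_simp; ring, ?_⟩
            set x := -p0/p1 with hxdef
            have hP : p0 + p1*x = 0 := by rw [hxdef]; field_simp; ring
            have key : p1^4 * (n0 + n1*x + n2*x^2 + n3*x^3 + n4*x^4) = 0 := by
              linear_combination h + (n1*p1^3 + n2*p1^2*(p1*x - p0)
                + n3*p1*(p1^2*x^2 - p0*p1*x + p0^2)
                + n4*(p1^3*x^3 - p0*p1^2*x^2 + p0^2*p1*x - p0^3)) * hP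
            rcases mul_eq_zero.mp key with h' | h'
            · exact absurd (pow_eq_zero_iff (by norm_num) |>.mp h') hp1
            · exact h'
      · rintro (⟨x, hP0, hN⟩ | ⟨_, h⟩)
        · right
          have hP : p0 + p1*x = 0 := by rw [hp2] at hP0; linear_combination hP0
          linear_combination p1^4 * hN - (n1*p1^3 + n2*p1^2*(p1*x - p0)
              + n3*p1*(p1^2*x^2 - p0*p1*x + p0^2)
              + n4*(p1^3*x^3 - p0*p1^2*x^2 + p0^2*p1*x - p0^3)) * hP
        · exact absurd h hn4
  · obtain ⟨α, β, hb, hc⟩ := quad_factor (p1/p2) (p0/p2)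
    have hp1 : p1 = -(p2*(α+β)) := by field_simp at hb; linear_combination hb
    have hp0 : p0 = p2*(α*β) := by field_simp at hc; linear_combination hc
    have hfac : sylDet p0 p1 p2 n0 n1 n2 n3 n4
        = p2^4 * (n0 + n1*α + n2*α^2 + n3*α^3 + n4*α^4)
               * (n0 + n1*β + n2*β^2 + n3*β^3 + n4*β^4) := by
      rw [hp1, hp0]; simp only [sylDet]; ring
    rw [hfac]
    constructor
    · intro h
      rcases mul_eq_zero.mp h with h | hβ
      · rcases mul_eq_zero.mp h with h | hα
        · exact absurd (pow_eq_zero_iff (by norm_num) |>.mp h) hp2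
        · exact Or.inl ⟨α, by rw [hp1, hp0]; ring, hα⟩
      · exact Or.inl ⟨β, by rw [hp1, hp0]; ring, hβ⟩
    · rintro (⟨x, hP, hN⟩ | ⟨h, _⟩)
      · have hsplit : p2 * ((x - α) * (x - β)) = 0 := by
          linear_combination hP - x*hp1 - hp0
        rcases mul_eq_zero.mp hsplit with h | h
        · exact absurd h hp2
        · rcases mul_eq_zero.mp h with h | h
          · have hxα : x = α := by linear_combination h
            rw [← hxα, hN]; ring
          · have hxβ : x = β := by linear_combination h
            rw [← hxβ, hN]; ring
      · exact absurd h hp2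

private lemma res22_aux {K : Type*} [Field K] [IsAlgClosed K]
    (a0 a1 a2 c0 c1 c2 : K) (ha2 : a2 ≠ 0) :
    (a0*c2 - a2*c0)^2 - (a0*c1 - a1*c0)*(a1*c2 - a2*c1) = 0 ↔
      (∃ x : K, a0 + a1*x + a2*x^2 = 0 ∧ c0 + c1*x + c2*x^2 = 0) := by
  obtain ⟨α, β, hb, hc⟩ := quad_factor (a1/a2) (a0/a2)
  have ha1 : a1 = -(a2*(α+β)) := by field_simp at hb; linear_combination hb
  have ha0 : a0 = a2*(α*β) := by field_simp at hc; linear_combination hc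
  have hfac : (a0*c2 - a2*c0)^2 - (a0*c1 - a1*c0)*(a1*c2 - a2*c1)
      = a2^2 * (c0 + c1*α + c2*α^2) * (c0 + c1*β + c2*β^2) := by
    rw [ha1, ha0]; ring
  rw [hfac]
  constructor
  · intro h
    rcases mul_eq_zero.mp h with h | hβ
    · rcases mul_eq_zero.mp h with h | hα
      · exact absurd (pow_eq_zero_iff (by norm_num) |>.mp h) ha2
      · exact ⟨α, by rw [ha1, ha0]; ring, hα⟩
    · exact ⟨β, by rw [ha1, ha0]; ring, hβ⟩
  · rintro ⟨x, hA, hC⟩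
    have hsplit : a2 * ((x - α) * (x - β)) = 0 := by
      linear_combination hA - x*ha1 - ha0
    rcases mul_eq_zero.mp hsplit with h | h
    · exact absurd h ha2
    · rcases mul_eq_zero.mp h with h | h
      · have hxα : x = α := by linear_combination h
        rw [← hxα, hC]; ring
      · have hxβ : x = β := by linear_combination h
        rw [← hxβ, hC]; ring

private lemma res22_eq_zero_iff {K : Type*} [Field K] [IsAlgClosed K]
    (a0 a1 a2 c0 c1 c2 : K) :
    (a0*c2 - a2*c0)^2 - (a0*c1 - a1*c0)*(a1*c2 - a2*c1) = 0 ↔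
      (∃ x : K, a0 + a1*x + a2*x^2 = 0 ∧ c0 + c1*x + c2*x^2 = 0) ∨ (a2 = 0 ∧ c2 = 0) := by
  by_cases ha2 : a2 = 0
  · by_cases hc2 : c2 = 0
    · constructor
      · intro _; exact Or.inr ⟨ha2, hc2⟩
      · intro _; rw [ha2, hc2]; ring
    · have hsym : (a0*c2 - a2*c0)^2 - (a0*c1 - a1*c0)*(a1*c2 - a2*c1)
          = (c0*a2 - c2*a0)^2 - (c0*a1 - c1*a0)*(c1*a2 - c2*a1) := by ring
      rw [hsym, res22_aux c0 c1 c2 a0 a1 a2 hc2]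
      constructor
      · rintro ⟨x, hC, hA⟩; exact Or.inl ⟨x, hA, hC⟩
      · rintro (⟨x, hA, hC⟩ | ⟨_, h⟩)
        · exact ⟨x, hC, hA⟩
        · exact absurd h hc2
  · rw [res22_aux a0 a1 a2 c0 c1 c2 ha2]
    constructor
    · exact fun h => Or.inl h
    · rintro (h | ⟨h, _⟩)
      · exact h
      · exact absurd h ha2

private lemma cancel_iff {K : Type*} [Field K] {b D S : K} (hb : b ≠ 0) (h : b * D = S) :
    D = 0 ↔ S = 0 := by
  constructor
  · intro h0; rw [← h, h0, mul_zero]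
  · intro hS
    rw [hS] at h
    rcases mul_eq_zero.mp h with h' | h'
    · exact absurd h' hb
    · exact h'

/-- **Resultant of doubly periodic functions.**
For `ρ₁, ρ₂, ρ₃` pairwise distinct and linearly independent coefficient vectors
`(a₀,a₁,a₂,b₀)`, `(c₀,c₁,c₂,d₀)`, the displayed 4×4 determinant in the minors `[ij]`
vanishes iff `a₀+a₁x+a₂x²+b₀y` and `c₀+c₁x+c₂x²+d₀y` have a common zero on the
projective elliptic curve `y² = (x−ρ₁)(x−ρ₂)(x−ρ₃)` (a common affine zero, or a
common zero at the point at infinity, i.e. `a₂ = 0` and `c₂ = 0`). -/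
theorem elliptic_resultant_formula
    {K : Type*} [Field K] [IsAlgClosed K] (hchar : ringChar K ≠ 2)
    (ρ₁ ρ₂ ρ₃ : K) (hρ12 : ρ₁ ≠ ρ₂) (hρ13 : ρ₁ ≠ ρ₃) (hρ23 : ρ₂ ≠ ρ₃)
    (a₀ a₁ a₂ b₀ c₀ c₁ c₂ d₀ : K)
    (hindep : LinearIndependent K ![![a₀, a₁, a₂, b₀], ![c₀, c₁, c₂, d₀]]) :
    Matrix.det (show Matrix (Fin 4) (Fin 4) K from
      let m := minor2 ![a₀, a₁, a₂, b₀] ![c₀, c₁, c₂, d₀]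
      !![-(ρ₁ * ρ₂) * m 1 3 - (ρ₁ + ρ₂) * m 0 3, -(ρ₁ * ρ₂) * m 2 3 + m 0 3, m 0 1, m 0 2;
         -(ρ₁ * ρ₂) * m 2 3 + m 0 3, (ρ₁ + ρ₂) * m 2 3 + m 1 3, m 0 2, m 1 2;
         m 0 1, m 0 2, ρ₃ * m 1 3 + m 0 3, ρ₃ * m 2 3;
         m 0 2, m 1 2, ρ₃ * m 2 3, -m 2 3]) = 0
    ↔ (∃ x y : K, y ^ 2 = (x - ρ₁) * (x - ρ₂) * (x - ρ₃) ∧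
          a₀ + a₁ * x + a₂ * x ^ 2 + b₀ * y = 0 ∧
          c₀ + c₁ * x + c₂ * x ^ 2 + d₀ * y = 0) ∨
      (a₂ = 0 ∧ c₂ = 0) := by
  generalize hDet : Matrix.det (show Matrix (Fin 4) (Fin 4) K from
      let m := minor2 ![a₀, a₁, a₂, b₀] ![c₀, c₁, c₂, d₀]
      !![-(ρ₁ * ρ₂) * m 1 3 - (ρ₁ + ρ₂) * m 0 3, -(ρ₁ * ρ₂) * m 2 3 + m 0 3, m 0 1, m 0 2;
         -(ρ₁ * ρ₂) * m 2 3 + m 0 3, (ρ₁ + ρ₂) * m 2 3 + m 1 3, m 0 2, m 1 2;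
         m 0 1, m 0 2, ρ₃ * m 1 3 + m 0 3, ρ₃ * m 2 3;
         m 0 2, m 1 2, ρ₃ * m 2 3, -m 2 3]) = D
  simp only [minor2, Matrix.cons_val_zero, Matrix.cons_val_one, Matrix.head_cons,
    Matrix.cons_val_two, Matrix.cons_val_three, Matrix.tail_cons] at hDet
  rw [det_fin_four'] at hDet
  rcases ne_or_eq b₀ 0 with hb | hb
  · -- use N = A² - b₀²S
    have hkey : b₀^4 * D = sylDet (a₀*d₀ - b₀*c₀) (a₁*d₀ - b₀*c₁) (a₂*d₀ - b₀*c₂)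
        (a₀^2 + b₀^2*(ρ₁*ρ₂*ρ₃)) (2*a₀*a₁ - b₀^2*(ρ₁*ρ₂ + ρ₁*ρ₃ + ρ₂*ρ₃))
        (a₁^2 + 2*a₀*a₂ + b₀^2*(ρ₁ + ρ₂ + ρ₃)) (2*a₁*a₂ - b₀^2) (a₂^2) := by
      rw [← hDet]; simp only [sylDet]; ring
    rw [cancel_iff (pow_ne_zero 4 hb) hkey, sylDet_eq_zero_iff]
    constructor
    · rintro (⟨x, hP, hN⟩ | ⟨hp2, hn4⟩)
      · refine Or.inl ⟨x, -(a₀ + a₁*x + a₂*x^2)/b₀, ?_, ?_, ?_⟩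
        · field_simp
          linear_combination hN
        · field_simp
          ring
        · field_simp
          linear_combination -hP
      · have ha2 : a₂ = 0 := pow_eq_zero_iff (by norm_num) |>.mp hn4
        have hc2 : b₀ * c₂ = 0 := by rw [ha2] at hp2; linear_combination -hp2
        exact Or.inr ⟨ha2, (mul_eq_zero.mp hc2).resolve_left hb⟩
    · rintro (⟨x, y, hcurve, hf, hg⟩ | ⟨ha2, hc2⟩)
      · exact Or.inl ⟨x, by linear_combination d₀*hf - b₀*hg,
          by linear_combination (a₀ + a₁*x + a₂*x^2 - b₀*y)*hf + b₀^2*hcurve⟩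
      · exact Or.inr ⟨by rw [ha2, hc2]; ring, by rw [ha2]; ring⟩
  · rcases ne_or_eq d₀ 0 with hd | hd
    · -- use Ñ = C² - d₀²S
      have hkey : d₀^4 * D = sylDet (a₀*d₀ - b₀*c₀) (a₁*d₀ - b₀*c₁) (a₂*d₀ - b₀*c₂)
          (c₀^2 + d₀^2*(ρ₁*ρ₂*ρ₃)) (2*c₀*c₁ - d₀^2*(ρ₁*ρ₂ + ρ₁*ρ₃ + ρ₂*ρ₃))
          (c₁^2 + 2*c₀*c₂ + d₀^2*(ρ₁ + ρ₂ + ρ₃)) (2*c₁*c₂ - d₀^2) (c₂^2) := by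
        rw [← hDet]; simp only [sylDet]; ring
      rw [cancel_iff (pow_ne_zero 4 hd) hkey, sylDet_eq_zero_iff]
      constructor
      · rintro (⟨x, hP, hN⟩ | ⟨hp2, hn4⟩)
        · refine Or.inl ⟨x, -(c₀ + c₁*x + c₂*x^2)/d₀, ?_, ?_, ?_⟩
          · field_simp
            linear_combination hN
          · field_simp
            linear_combination hP
          · field_simp
            ring
        · have hc2 : c₂ = 0 := pow_eq_zero_iff (by norm_num) |>.mp hn4
          have ha2 : a₂ * d₀ = 0 := by rw [hc2] at hp2; linear_combination hp2
          exact Or.inr ⟨(mul_eq_zero.mp ha2).resolve_right hd, hc2⟩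
      · rintro (⟨x, y, hcurve, hf, hg⟩ | ⟨ha2, hc2⟩)
        · exact Or.inl ⟨x, by linear_combination d₀*hf - b₀*hg,
            by linear_combination (c₀ + c₁*x + c₂*x^2 - d₀*y)*hg + d₀^2*hcurve⟩
        · exact Or.inr ⟨by rw [ha2, hc2]; ring, by rw [hc2]; ring⟩
    · -- b₀ = d₀ = 0
      rw [hb, hd] at hDet
      have hD3 : D = ((a₀*c₂ - a₂*c₀)^2 - (a₀*c₁ - a₁*c₀)*(a₁*c₂ - a₂*c₁))^2 := by
        rw [← hDet]; ring
      rw [hD3, pow_eq_zero_iff (by norm_num : (2:ℕ) ≠ 0), res22_eq_zero_iff]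
      constructor
      · rintro (⟨x, hA, hC⟩ | h)
        · obtain ⟨y, hy⟩ := IsAlgClosed.exists_pow_nat_eq
            ((x - ρ₁) * (x - ρ₂) * (x - ρ₃)) (by norm_num : 0 < 2)
          exact Or.inl ⟨x, y, hy, by rw [hb]; linear_combination hA,
            by rw [hd]; linear_combination hC⟩
        · exact Or.inr h
      · rintro (⟨x, y, hcurve, hf, hg⟩ | h)
        · rw [hb] at hf; rw [hd] at hg
          exact Or.inl ⟨x, by linear_combination hf, by linear_combination hg⟩
        · exact Or.inr h
end

section
/- Let K be a field, W a K-vector space of finite dimension v ≥ 1, and V = W* its dual. Let ⌟ denote the interior product (contraction) ∧^p V ⊗ ∧^q W → ∧^{q−p} W characterized by ⟨b, a⌟x⟩ = ⟨a∧b, x⟩ for all b ∈ ∧^{q−p}V, where ⟨φ₁∧…∧φ_m, w₁∧…∧w_m⟩ = det(φ_r(w_s)) is the determinant pairing between ∧^m V and ∧^m W. Then for all integers i, j ≥ 0 with i + j ≤ v, and all a ∈ ∧^{v−i−j}V, β ∈ ∧^{v−i}W, γ ∈ ∧^{v−j}W, the following identity holds in ∧^v W: (a⌟γ) ∧ β =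 (−1)^{(v−1)(i+j)+ij} · (a⌟β) ∧ γ. -/
open ExteriorAlgebra

namespace ContractionSign

variable (K : Type*) [Field K] {M : Type*} [AddCommGroup M] [Module K M] {v : ℕ}

/-- Wedge of a list of basis indices. -/
noncomputable def wedgeL (b : Fin v → M) (l : List (Fin v)) : ExteriorAlgebra K M :=
  (l.map fun k => ExteriorAlgebra.ι K (b k)).prod

/-- Monomial attached to a finset. -/
noncomputable def mono (b : Fin v → M) (S : Finset (Fin v)) : ExteriorAlgebra K M :=
  wedgeL K b (S.sort (· ≤ ·))

/-- Inversion count between two finsets. -/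
def finInv (S T : Finset (Fin v)) : ℕ := ∑ s ∈ S, (T.filter (· < s)).card

variable (b : Fin v → M)

lemma wedgeL_nil : wedgeL K b [] = 1 := rfl

lemma wedgeL_cons (x : Fin v) (l : List (Fin v)) :
    wedgeL K b (x :: l) = ExteriorAlgebra.ι K (b x) * wedgeL K b l := by
  simp [wedgeL]

lemma wedgeL_append (l₁ l₂ : List (Fin v)) :
    wedgeL K b (l₁ ++ l₂) = wedgeL K b l₁ * wedgeL K b l₂ := by
  simp [wedgeL]

lemma ιMulti_cast {m m' : ℕ} (h : m = m') (f : Fin m' → M) :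
    ιMulti K m' f = ιMulti K m (f ∘ Fin.cast h) := by
  subst h; rfl

lemma wedgeL_eq_ιMulti (l : List (Fin v)) :
    wedgeL K b l = ιMulti K l.length (fun i => b (l.get i)) := by
  rw [ιMulti_apply]
  unfold wedgeL
  congr 1
  conv_lhs => rw [← List.ofFn_get l]
  rw [List.map_ofFn]
  rfl

lemma wedgeL_mem (l : List (Fin v)) : wedgeL K b l ∈ ⋀[K]^(l.length) M := by
  rw [wedgeL_eq_ιMulti]
  exact ExteriorAlgebra.ιMulti_range K l.length (Set.mem_range_self _)

lemma mono_mem (S : Finset (Fin v)) : mono K b S ∈ ⋀[K]^(S.card) M := by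
  have := wedgeL_mem K b (S.sort (· ≤ ·))
  rwa [Finset.length_sort] at this

lemma wedgeL_eq_zero_of_not_nodup (l : List (Fin v)) (h : ¬ l.Nodup) :
    wedgeL K b l = 0 := by
  rw [wedgeL_eq_ιMulti]
  rw [List.nodup_iff_injective_get] at h
  rw [Function.not_injective_iff] at h
  obtain ⟨i, j, hij, hne⟩ := h
  exact AlternatingMap.map_eq_zero_of_eq _ _ (by rw [hij]) hne

-- sort of insert-at-bottom
lemma mono_insert_min {T : Finset (Fin v)} {w : Fin v} (hw : w ∉ T) (hmin : ∀ t ∈ T, w ≤ t) :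
    mono K b (insert w T) = ExteriorAlgebra.ι K (b w) * mono K b T := by
  unfold mono
  rw [Finset.sort_insert _ hmin hw, wedgeL_cons]

lemma mono_empty : mono K b ∅ = 1 := by simp [mono, wedgeL]

lemma mono_erase_min {T : Finset (Fin v)} (hT : T.Nonempty) :
    mono K b T = ExteriorAlgebra.ι K (b (T.min' hT)) * mono K b (T.erase (T.min' hT)) := by
  have h1 : insert (T.min' hT) (T.erase (T.min' hT)) = T := Finset.insert_erase (T.min'_mem hT)
  conv_lhs => rw [← h1]
  rw [mono_insert_min]
  · exact Finset.notMem_erase _ _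
  · intro t ht
    exact T.min'_le t (Finset.mem_of_mem_erase ht)

/-- F0: inserting a single vector. -/
lemma ι_mul_mono (n : ℕ) : ∀ (T : Finset (Fin v)), T.card = n → ∀ w ∉ T,
    ExteriorAlgebra.ι K (b w) * mono K b T
      = ((-1 : K) ^ (T.filter (· < w)).card) • mono K b (insert w T) := by
  induction n with
  | zero =>
    intro T hT w hw
    rw [Finset.card_eq_zero] at hT
    subst hT
    rw [mono_insert_min K b hw (by simp)]
    simp [mono_empty]
  | succ n ih =>
    intro T hT w hw
    rcases Finset.card_pos.mp (by omega : 0 < T.card) with ⟨t₀, ht₀⟩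
    have hTne : T.Nonempty := ⟨t₀, ht₀⟩
    set m₀ := T.min' hTne with hm₀
    by_cases hlt : w < m₀
    · have hmin : ∀ t ∈ T, w ≤ t := fun t ht => le_of_lt (lt_of_lt_of_le hlt (T.min'_le t ht))
      have hfilter : T.filter (· < w) = ∅ := by
        apply Finset.filter_false_of_mem
        intro t ht
        have := T.min'_le t ht
        simp only [not_lt]
        omega
      rw [hfilter, Finset.card_empty, pow_zero, one_smul, mono_insert_min K b hw hmin]
    · have hne : w ≠ m₀ := fun h => hw (h ▸ T.min'_mem hTne)
      have hm₀w : m₀ < w := by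
        rcases lt_or_ge m₀ w with h | h
        · exact h
        · exact absurd (lt_of_le_of_ne h hne) hlt
      set T' := T.erase m₀ with hT'
      have hT'card : T'.card = n := by
        rw [hT', Finset.card_erase_of_mem (T.min'_mem hTne)]; omega
      have hwT' : w ∉ T' := fun h => hw (Finset.mem_of_mem_erase h)
      have hanti : ExteriorAlgebra.ι K (b w) * ExteriorAlgebra.ι K (b m₀)
          = -(ExteriorAlgebra.ι K (b m₀) * ExteriorAlgebra.ι K (b w)) := by
        have := ExteriorAlgebra.ι_add_mul_swap (R := K) (b w) (b m₀)
        rw [eq_neg_iff_add_eq_zero]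
        exact this
      rw [mono_erase_min K b hTne, ← hm₀, ← hT', ← mul_assoc, hanti, neg_mul, mul_assoc,
        ih T' hT'card w hwT', mul_smul_comm]
      have hm₀ins : m₀ ∉ insert w T' := by
        simp only [Finset.mem_insert]
        rintro (h | h)
        · exact hne h.symm
        · exact Finset.notMem_erase _ _ h
      have hm₀min : ∀ t ∈ insert w T', m₀ ≤ t := by
        intro t ht
        rcases Finset.mem_insert.mp ht with h | h
        · subst h; exact le_of_lt hm₀w
        · exact T.min'_le t (Finset.mem_of_mem_erase h)
      rw [← mono_insert_min K b hm₀ins hm₀min]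
      have hins : insert m₀ (insert w T') = insert w T := by
        rw [Finset.insert_comm, Finset.insert_erase (T.min'_mem hTne)]
      rw [hins]
      have hcount : (T.filter (· < w)).card = (T'.filter (· < w)).card + 1 := by
        have : T = insert m₀ T' := (Finset.insert_erase (T.min'_mem hTne)).symm
        rw [this, Finset.filter_insert, if_pos hm₀w,
          Finset.card_insert_of_notMem (fun h => Finset.notMem_erase m₀ T (Finset.mem_of_mem_filter _ h))]
      rw [hcount, pow_succ]
      rw [← smul_smul]
      rw [smul_comm]
      simp


/-- F1: multiplying two sorted monomials over disjoint finsets. -/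
lemma mono_mul_mono_disjoint (n : ℕ) : ∀ (S T : Finset (Fin v)), S.card = n → Disjoint S T →
    mono K b S * mono K b T = ((-1 : K) ^ finInv S T) • mono K b (S ∪ T) := by
  induction n with
  | zero =>
    intro S T hS _
    rw [Finset.card_eq_zero] at hS
    subst hS
    simp [mono_empty, finInv]
  | succ n ih =>
    intro S T hS hd
    have hSne : S.Nonempty := Finset.card_pos.mp (by omega)
    set m₀ := S.min' hSne with hm₀
    set S' := S.erase m₀ with hS'
    have hS'card : S'.card = n := by
      rw [hS', Finset.card_erase_of_mem (S.min'_mem hSne)]; omega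
    have hd' : Disjoint S' T := Finset.disjoint_of_subset_left (Finset.erase_subset _ _) hd
    rw [mono_erase_min K b hSne, ← hm₀, ← hS', mul_assoc, ih S' T hS'card hd']
    rw [mul_smul_comm]
    have hm₀ST : m₀ ∉ S' ∪ T := by
      rw [Finset.mem_union]
      rintro (h | h)
      · exact Finset.notMem_erase _ _ h
      · exact (Finset.disjoint_left.mp hd (S.min'_mem hSne)) h
    rw [ι_mul_mono K b (S' ∪ T).card _ rfl _ hm₀ST]
    have hins : insert m₀ (S' ∪ T) = S ∪ T := by
      rw [← Finset.insert_union, Finset.insert_erase (S.min'_mem hSne)]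
    rw [hins, smul_smul, ← pow_add]
    congr 2
    -- inversion count
    have hfu : (S' ∪ T).filter (· < m₀) = T.filter (· < m₀) := by
      rw [Finset.filter_union]
      have : S'.filter (· < m₀) = ∅ := by
        apply Finset.filter_false_of_mem
        intro t ht
        have h1 : m₀ ≤ t := S.min'_le t (Finset.mem_of_mem_erase ht)
        simp only [not_lt]
        exact h1
      rw [this, Finset.empty_union]
    rw [hfu]
    have hSins : S = insert m₀ S' := (Finset.insert_erase (S.min'_mem hSne)).symm
    have : finInv S T = (T.filter (· < m₀)).card + finInv S' T := by
      rw [finInv, hSins, Finset.sum_insert (Finset.notMem_erase _ _)]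
      rfl
    omega

lemma mono_mul_mono_not_disjoint {S T : Finset (Fin v)} (h : ¬ Disjoint S T) :
    mono K b S * mono K b T = 0 := by
  unfold mono
  rw [← wedgeL_append]
  apply wedgeL_eq_zero_of_not_nodup
  rw [List.nodup_append]
  push_neg
  intro _ _
  rw [Finset.not_disjoint_iff] at h
  obtain ⟨x, hxS, hxT⟩ := h
  exact ⟨x, (Finset.mem_sort _).mpr hxS, x, (Finset.mem_sort _).mpr hxT, rfl⟩

lemma mono_mul_mono (S T : Finset (Fin v)) :
    mono K b S * mono K b T =
      if Disjoint S T then ((-1 : K) ^ finInv S T) • mono K b (S ∪ T) else 0 := by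
  split_ifs with h
  · exact mono_mul_mono_disjoint K b S.card S T rfl h
  · exact mono_mul_mono_not_disjoint K b h


lemma finInv_union_right {S T T' : Finset (Fin v)} (h : Disjoint T T') :
    finInv S (T ∪ T') = finInv S T + finInv S T' := by
  unfold finInv
  rw [← Finset.sum_add_distrib]
  apply Finset.sum_congr rfl
  intro s _
  rw [Finset.filter_union, Finset.card_union_of_disjoint]
  exact Finset.disjoint_filter_filter h

lemma finInv_add_finInv {S T : Finset (Fin v)} (h : Disjoint S T) :
    finInv S T + finInv T S = S.card * T.card := by
  have hswap : finInv T S = ∑ s ∈ S, (T.filter (s < ·)).card := by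
    unfold finInv
    simp only [Finset.card_filter]
    rw [Finset.sum_comm]
  rw [hswap, finInv, ← Finset.sum_add_distrib]
  have : ∀ s ∈ S, (T.filter (· < s)).card + (T.filter (s < ·)).card = T.card := by
    intro s hs
    have hsT : s ∉ T := Finset.disjoint_left.mp h hs
    have : T.filter (s < ·) = T.filter (fun t => ¬ t < s) := by
      apply Finset.filter_congr
      intro t ht
      have : t ≠ s := fun he => hsT (he ▸ ht)
      simp only [not_lt, eq_iff_iff]
      constructor
      · exact le_of_lt
      · intro h1; exact lt_of_le_of_ne h1 (Ne.symm this)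
    rw [this, Finset.card_filter_add_card_filter_not]
  rw [Finset.sum_congr rfl this, Finset.sum_const, smul_eq_mul]

lemma neg_one_pow_congr (a c : ℕ) (h : a % 2 = c % 2) : ((-1 : K)) ^ a = (-1 : K) ^ c := by
  conv_lhs => rw [← Nat.div_add_mod a 2]
  conv_rhs => rw [← Nat.div_add_mod c 2]
  rw [pow_add, pow_add, pow_mul, pow_mul, neg_one_sq, one_pow, one_pow, h]


lemma mem_span_mono (bb : Module.Basis (Fin v) K M) (m : ℕ) {x : ExteriorAlgebra K M}
    (hx : x ∈ ⋀[K]^m M) :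
    x ∈ Submodule.span K ((fun S => mono K (⇑bb) S) '' {S : Finset (Fin v) | S.card = m}) := by
  rw [← ExteriorAlgebra.ιMulti_span_fixedDegree] at hx
  refine Submodule.span_induction ?_ (Submodule.zero_mem _)
    (fun x y _ _ hx hy => Submodule.add_mem _ hx hy)
    (fun c x _ hx => Submodule.smul_mem _ c hx) hx
  rintro _ ⟨w, rfl⟩
  have expand : (ιMulti K m) w
      = ∑ r : Fin m → Fin v, (∏ i, bb.repr (w i) (r i)) • (ιMulti K m) (fun i => bb (r i)) := by
    have h1 : w = fun s => ∑ k, bb.repr (w s) k • bb k := funext fun s => (bb.sum_repr (w s)).symm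
    conv_lhs => rw [h1]
    rw [← AlternatingMap.coe_multilinearMap, MultilinearMap.map_sum]
    apply Finset.sum_congr rfl
    intro r _
    rw [MultilinearMap.map_smul_univ]
  rw [expand]
  apply Submodule.sum_mem
  intro r _
  apply Submodule.smul_mem
  by_cases hr : Function.Injective r
  · set S : Finset (Fin v) := Finset.image r Finset.univ with hSdef
    have hS : S.card = m := by
      rw [hSdef, Finset.card_image_of_injective _ hr, Finset.card_univ, Fintype.card_fin]
    set l := S.sort (· ≤ ·) with hldef
    have hl : l.length = m := by rw [hldef, Finset.length_sort, hS]
    have hmem : ∀ i : Fin m, r i ∈ l := by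
      intro i; rw [hldef, Finset.mem_sort]; exact Finset.mem_image_of_mem r (Finset.mem_univ i)
    have hidx : ∀ i : Fin m, l.idxOf (r i) < l.length :=
      fun i => List.idxOf_lt_length_iff.mpr (hmem i)
    set σf : Fin m → Fin m := fun i => ⟨l.idxOf (r i), hl ▸ hidx i⟩ with hσf
    have hget : ∀ i : Fin m, l[l.idxOf (r i)]'(hidx i) = r i :=
      fun i => List.getElem_idxOf (hidx i)
    have hσinj : Function.Injective σf := by
      intro i i' he
      apply hr
      have hv : l.idxOf (r i) = l.idxOf (r i') := congrArg Fin.val he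
      rw [← hget i, ← hget i']
      congr 1
    have σe : Equiv.Perm (Fin m) := Equiv.ofBijective σf (Finite.injective_iff_bijective.mp hσinj)
    set g : Fin m → M := fun i => bb (l.get (Fin.cast hl.symm i)) with hg
    have hcomp : (fun i => bb (r i)) = g ∘ (Equiv.ofBijective σf (Finite.injective_iff_bijective.mp hσinj)) := by
      funext i
      show bb (r i) = g (σf i)
      rw [hg]
      simp only [List.get_eq_getElem]
      congr 1
      exact (hget i).symm
    rw [hcomp, AlternatingMap.map_perm]
    have hmono : (ιMulti K m) g = mono K (⇑bb) S := by
      rw [mono, wedgeL_eq_ιMulti, ιMulti_cast K hl.symm]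
      rfl
    rw [hmono]
    rcases Int.units_eq_one_or (Equiv.Perm.sign (Equiv.ofBijective σf (Finite.injective_iff_bijective.mp hσinj))) with h | h <;> rw [h]
    · rw [one_smul]
      exact Submodule.subset_span ⟨S, hS, rfl⟩
    · have : ((-1 : ℤˣ) • mono K (⇑bb) S) = -(mono K (⇑bb) S) := by
        rw [Units.smul_def]
        simp
      rw [this]
      exact Submodule.neg_mem _ (Submodule.subset_span ⟨S, hS, rfl⟩)
  · rw [Function.not_injective_iff] at hr
    obtain ⟨i, j, hij, hne⟩ := hr
    rw [AlternatingMap.map_eq_zero_of_eq _ _ (by rw [hij]) hne]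
    exact Submodule.zero_mem _


section Pairing

variable {W : Type*} [AddCommGroup W] [Module K W]

lemma pair_mono_delta (e : Module.Basis (Fin v) K W)
    (pair : ExteriorAlgebra K (Module.Dual K W) →ₗ[K] ExteriorAlgebra K W →ₗ[K] K)
    (hpair_det : ∀ (m : ℕ) (φ : Fin m → Module.Dual K W) (w : Fin m → W),
      pair (ιMulti K m φ) (ιMulti K m w) =
        Matrix.det (Matrix.of fun r s : Fin m => φ r (w s)))
    {S T : Finset (Fin v)} (h : S.card = T.card) :
    pair (mono K (⇑e.dualBasis) S) (mono K (⇑e) T) = if S = T then 1 else 0 := by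
  have h' : (S.sort (· ≤ ·)).length = (T.sort (· ≤ ·)).length := by
    simp [Finset.length_sort, h]
  rw [mono, mono, wedgeL_eq_ιMulti, wedgeL_eq_ιMulti,
    ιMulti_cast K h' (fun i => e ((T.sort (· ≤ ·)).get i)), hpair_det]
  split_ifs with hST
  · subst hST
    have hinj := List.nodup_iff_injective_get.mp (S.sort_nodup (· ≤ ·))
    have hmat : (Matrix.of fun r s : Fin (S.sort (· ≤ ·)).length =>
        (e.dualBasis ((S.sort (· ≤ ·)).get r))
          (((fun i => e ((S.sort (· ≤ ·)).get i)) ∘ Fin.cast h') s))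
        = (1 : Matrix (Fin (S.sort (· ≤ ·)).length) (Fin (S.sort (· ≤ ·)).length) K) := by
      ext r s
      rw [Matrix.of_apply, Function.comp_apply, Module.Basis.dualBasis_apply_self, Matrix.one_apply]
      have hcast : Fin.cast h' s = s := Fin.ext rfl
      rw [hcast]
      by_cases hrs : r = s
      · subst hrs; rw [if_pos rfl, if_pos rfl]
      · rw [if_neg (fun hg => hrs (hinj hg).symm), if_neg hrs]
    rw [hmat, Matrix.det_one]
  · have hnsub : ¬ S ⊆ T := fun hsub => hST (Finset.eq_of_subset_of_card_le hsub (le_of_eq h.symm))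
    obtain ⟨x, hxS, hxT⟩ := Finset.not_subset.mp hnsub
    have hxl : x ∈ S.sort (· ≤ ·) := (Finset.mem_sort _).mpr hxS
    have hidx : (S.sort (· ≤ ·)).idxOf x < (S.sort (· ≤ ·)).length :=
      List.idxOf_lt_length_iff.mpr hxl
    apply Matrix.det_eq_zero_of_row_eq_zero ⟨_, hidx⟩
    intro s
    rw [Matrix.of_apply, Function.comp_apply, Module.Basis.dualBasis_apply_self]
    have hget : (S.sort (· ≤ ·)).get ⟨_, hidx⟩ = x := List.getElem_idxOf hidx
    rw [hget, if_neg]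
    intro hg
    apply hxT
    rw [← hg]
    exact (Finset.mem_sort _).mp (List.get_mem _ (Fin.cast h' s))


lemma mono_repr (e : Module.Basis (Fin v) K W)
    (pair : ExteriorAlgebra K (Module.Dual K W) →ₗ[K] ExteriorAlgebra K W →ₗ[K] K)
    (hpair_det : ∀ (m : ℕ) (φ : Fin m → Module.Dual K W) (w : Fin m → W),
      pair (ιMulti K m φ) (ιMulti K m w) =
        Matrix.det (Matrix.of fun r s : Fin m => φ r (w s)))
    (m : ℕ) {y : ExteriorAlgebra K W} (hy : y ∈ ⋀[K]^m W) :
    y = ∑ S ∈ Finset.powersetCard m (Finset.univ : Finset (Fin v)),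
      pair (mono K (⇑e.dualBasis) S) y • mono K (⇑e) S := by
  have hsp := mem_span_mono K e m hy
  refine Submodule.span_induction (p := fun x _ => x = ∑ S ∈ Finset.powersetCard m (Finset.univ : Finset (Fin v)),
      pair (mono K (⇑e.dualBasis) S) x • mono K (⇑e) S) ?_ ?_ ?_ ?_ hsp
  · rintro _ ⟨T, hT, rfl⟩
    have hTc : T.card = m := hT
    rw [Finset.sum_eq_single_of_mem T (Finset.mem_powersetCard_univ.mpr hTc)]
    · rw [pair_mono_delta K e pair hpair_det rfl, if_pos rfl, one_smul]
    · intro S hS hne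
      have hSc : S.card = m := Finset.mem_powersetCard_univ.mp hS
      rw [pair_mono_delta K e pair hpair_det (by rw [hSc, hTc]), if_neg hne, zero_smul]
  · simp
  · intro x y _ _ hpx hpy
    simp only [map_add, add_smul, Finset.sum_add_distrib]
    rw [← hpx, ← hpy]
  · intro c x _ hpx
    simp only [map_smul, smul_eq_mul, mul_smul]
    rw [← Finset.smul_sum, ← hpx]


lemma contr_mono (e : Module.Basis (Fin v) K W)
    (pair : ExteriorAlgebra K (Module.Dual K W) →ₗ[K] ExteriorAlgebra K W →ₗ[K] K)
    (hpair_det : ∀ (m : ℕ) (φ : Fin m → Module.Dual K W) (w : Fin m → W),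
      pair (ιMulti K m φ) (ιMulti K m w) =
        Matrix.det (Matrix.of fun r s : Fin m => φ r (w s)))
    (contr : ExteriorAlgebra K (Module.Dual K W) →ₗ[K]
      ExteriorAlgebra K W →ₗ[K] ExteriorAlgebra K W)
    (hcontr_deg : ∀ (p q : ℕ), p ≤ q →
      ∀ a ∈ ⋀[K]^p (Module.Dual K W), ∀ x ∈ ⋀[K]^q W, contr a x ∈ ⋀[K]^(q - p) W)
    (hcontr_char : ∀ (p q : ℕ), p ≤ q →
      ∀ a ∈ ⋀[K]^p (Module.Dual K W), ∀ x ∈ ⋀[K]^q W,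
        ∀ b ∈ ⋀[K]^(q - p) (Module.Dual K W),
          pair b (contr a x) = pair (a * b) x)
    {A C : Finset (Fin v)} (hAC : A.card ≤ C.card) :
    contr (mono K (⇑e.dualBasis) A) (mono K (⇑e) C)
      = if A ⊆ C then ((-1 : K) ^ finInv A (C \ A)) • mono K (⇑e) (C \ A) else 0 := by
  have hmemA := mono_mem K (⇑e.dualBasis) A
  have hmemC := mono_mem K (⇑e) C
  have hdeg := hcontr_deg A.card C.card hAC _ hmemA _ hmemC
  have hrep := mono_repr K e pair hpair_det (C.card - A.card) hdeg
  rw [hrep]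
  have hcoeff : ∀ S ∈ Finset.powersetCard (C.card - A.card) (Finset.univ : Finset (Fin v)),
      pair (mono K (⇑e.dualBasis) S) (contr (mono K (⇑e.dualBasis) A) (mono K (⇑e) C))
        = if Disjoint A S ∧ A ∪ S = C then (-1 : K) ^ finInv A S else 0 := by
    intro S hS
    have hSc : S.card = C.card - A.card := Finset.mem_powersetCard_univ.mp hS
    have hmemS : mono K (⇑e.dualBasis) S ∈ ⋀[K]^(C.card - A.card) (Module.Dual K W) := by
      rw [← hSc]; exact mono_mem K (⇑e.dualBasis) S
    rw [hcontr_char A.card C.card hAC _ hmemA _ hmemC _ hmemS]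
    by_cases hdisj : Disjoint A S
    · have hcard : (A ∪ S).card = C.card := by
        rw [Finset.card_union_of_disjoint hdisj, hSc]; omega
      rw [mono_mul_mono_disjoint K (⇑e.dualBasis) A.card A S rfl hdisj, map_smul,
        LinearMap.smul_apply, pair_mono_delta K e pair hpair_det hcard]
      by_cases hu : A ∪ S = C
      · rw [if_pos hu, if_pos ⟨hdisj, hu⟩, smul_eq_mul, mul_one]
      · rw [if_neg hu, if_neg (fun hc => hu hc.2), smul_eq_mul, mul_zero]
    · rw [mono_mul_mono_not_disjoint K _ hdisj, map_zero, LinearMap.zero_apply,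
        if_neg (fun hc => hdisj hc.1)]
  rw [Finset.sum_congr rfl (fun S hS => by rw [hcoeff S hS])]
  split_ifs with hsub
  · have hmem0 : C \ A ∈ Finset.powersetCard (C.card - A.card) (Finset.univ : Finset (Fin v)) :=
      Finset.mem_powersetCard_univ.mpr (Finset.card_sdiff_of_subset hsub)
    rw [Finset.sum_eq_single_of_mem _ hmem0]
    · rw [if_pos ⟨Finset.disjoint_sdiff, Finset.union_sdiff_of_subset hsub⟩]
    · intro S _ hne
      rw [if_neg, zero_smul]
      rintro ⟨hd, hu⟩
      apply hne
      rw [← Finset.union_sdiff_cancel_left hd, hu]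
  · apply Finset.sum_eq_zero
    intro S _
    rw [if_neg, zero_smul]
    rintro ⟨_, hu⟩
    exact hsub (hu ▸ Finset.subset_union_left)

end Pairing


lemma cond_forward {v i j : ℕ} (hij : i + j ≤ v) {A B C : Finset (Fin v)}
    (hA : A.card = v - i - j) (hB : B.card = v - i) (hC : C.card = v - j)
    (h1 : A ⊆ C) (h2 : Disjoint (C \ A) B) : A ⊆ B ∧ Disjoint (B \ A) C := by
  have hCA : (C \ A).card = i := by rw [Finset.card_sdiff_of_subset h1, hA, hC]; omega
  have hsub : C \ A ⊆ Bᶜ := fun x hx => Finset.mem_compl.mpr (Finset.disjoint_left.mp h2 hx)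
  have hBc : Bᶜ.card = i := by rw [Finset.card_compl, hB, Fintype.card_fin]; omega
  have hEq : C \ A = Bᶜ := Finset.eq_of_subset_of_card_le hsub (by omega)
  constructor
  · intro x hxA
    by_contra hxB
    have hx : x ∈ Bᶜ := Finset.mem_compl.mpr hxB
    rw [← hEq] at hx
    exact (Finset.mem_sdiff.mp hx).2 hxA
  · rw [Finset.disjoint_left]
    intro x hx hxC
    obtain ⟨hxB, hxA⟩ := Finset.mem_sdiff.mp hx
    have hx2 : x ∈ C \ A := Finset.mem_sdiff.mpr ⟨hxC, hxA⟩
    rw [hEq] at hx2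
    exact Finset.mem_compl.mp hx2 hxB

lemma even_key {v i j : ℕ} (hij : i + j ≤ v) (hv : 1 ≤ v) :
    ((v - i - j) * i + (v - i - j) * j + (v - 1) * (i + j)) % 2 = 0 := by
  have h : (v - i - j) * i + (v - i - j) * j + (v - 1) * (i + j)
      = ((v - i - j) + (v - 1)) * (i + j) := by ring
  rw [h]
  rcases Nat.even_or_odd (i + j) with he | ho
  · rw [Nat.mul_mod, Nat.even_iff.mp he, mul_zero, Nat.zero_mod]
  · obtain ⟨k, hk⟩ := ho
    have h2 : ((v - i - j) + (v - 1)) % 2 = 0 := by omega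
    rw [Nat.mul_mod, h2, zero_mul, Nat.zero_mod]

end ContractionSign


open ContractionSign in
set_option maxHeartbeats 2000000 in
/-- **Sign lemma for contractions** (the fiberwise form of the paper's Lemma on signs).
Let `W` be a `K`-vector space of finite dimension `v ≥ 1` and `V = W*`. Suppose
`pair` is the determinant pairing between `∧^m V` and `∧^m W` (vanishing on mixed
degrees), and `contr` is the interior product `∧^p V ⊗ ∧^q W → ∧^{q−p} W`
characterized by `⟨b, a⌟x⟩ = ⟨a∧b, x⟩` for all `b ∈ ∧^{q−p} V`. Then for all
`i + j ≤ v`, `a ∈ ∧^{v−i−j} V`, `β ∈ ∧^{v−i} W`, `γ ∈ ∧^{v−j} W`, one has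
`(a⌟γ) ∧ β = (−1)^{(v−1)(i+j)+ij} (a⌟β) ∧ γ` in `∧^v W`. -/
theorem contraction_sign_identity
    {K : Type*} [Field K] {W : Type*} [AddCommGroup W] [Module K W]
    [FiniteDimensional K W] (v : ℕ) (hv : 1 ≤ v)
    (hrank : Module.finrank K W = v)
    (pair : ExteriorAlgebra K (Module.Dual K W) →ₗ[K] ExteriorAlgebra K W →ₗ[K] K)
    (hpair_det : ∀ (m : ℕ) (φ : Fin m → Module.Dual K W) (w : Fin m → W),
      pair (ιMulti K m φ) (ιMulti K m w) =
        Matrix.det (Matrix.of fun r s : Fin m => φ r (w s)))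
    (hpair_mixed : ∀ (m m' : ℕ), m ≠ m' →
      ∀ (φ : Fin m → Module.Dual K W) (w : Fin m' → W),
        pair (ιMulti K m φ) (ιMulti K m' w) = 0)
    (contr : ExteriorAlgebra K (Module.Dual K W) →ₗ[K]
      ExteriorAlgebra K W →ₗ[K] ExteriorAlgebra K W)
    (hcontr_deg : ∀ (p q : ℕ), p ≤ q →
      ∀ a ∈ ⋀[K]^p (Module.Dual K W), ∀ x ∈ ⋀[K]^q W, contr a x ∈ ⋀[K]^(q - p) W)
    (hcontr_char : ∀ (p q : ℕ), p ≤ q →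
      ∀ a ∈ ⋀[K]^p (Module.Dual K W), ∀ x ∈ ⋀[K]^q W,
        ∀ b ∈ ⋀[K]^(q - p) (Module.Dual K W),
          pair b (contr a x) = pair (a * b) x) :
    ∀ (i j : ℕ), i + j ≤ v →
      ∀ a ∈ ⋀[K]^(v - i - j) (Module.Dual K W),
        ∀ β ∈ ⋀[K]^(v - i) W, ∀ γ ∈ ⋀[K]^(v - j) W,
          contr a γ * β = ((-1 : K) ^ ((v - 1) * (i + j) + i * j)) • (contr a β * γ) := by
  classical
  have e : Module.Basis (Fin v) K W := Module.finBasisOfFinrankEq K W hrank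
  intro i j hij
  suffices H : ∀ a ∈ Submodule.span K
        ((fun S => mono K (⇑e.dualBasis) S) '' {S : Finset (Fin v) | S.card = v - i - j}),
      ∀ β ∈ Submodule.span K ((fun S => mono K (⇑e) S) '' {S : Finset (Fin v) | S.card = v - i}),
      ∀ γ ∈ Submodule.span K ((fun S => mono K (⇑e) S) '' {S : Finset (Fin v) | S.card = v - j}),
      contr a γ * β = ((-1 : K) ^ ((v - 1) * (i + j) + i * j)) • (contr a β * γ) by
    intro a ha β hβ γ hγ
    exact H a (mem_span_mono K e.dualBasis _ ha) β (mem_span_mono K e _ hβ)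
      γ (mem_span_mono K e _ hγ)
  intro a ha
  refine Submodule.span_induction (p := fun a _ =>
      ∀ β ∈ Submodule.span K ((fun S => mono K (⇑e) S) '' {S : Finset (Fin v) | S.card = v - i}),
      ∀ γ ∈ Submodule.span K ((fun S => mono K (⇑e) S) '' {S : Finset (Fin v) | S.card = v - j}),
      contr a γ * β = ((-1 : K) ^ ((v - 1) * (i + j) + i * j)) • (contr a β * γ)) ?_ ?_ ?_ ?_ ha
  · -- a is a monomial
    rintro _ ⟨A, hA, rfl⟩
    have hAcard : A.card = v - i - j := hA
    intro β hβ
    refine Submodule.span_induction (p := fun β _ =>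
        ∀ γ ∈ Submodule.span K ((fun S => mono K (⇑e) S) '' {S : Finset (Fin v) | S.card = v - j}),
        contr (mono K (⇑e.dualBasis) A) γ * β
          = ((-1 : K) ^ ((v - 1) * (i + j) + i * j)) •
            (contr (mono K (⇑e.dualBasis) A) β * γ)) ?_ ?_ ?_ ?_ hβ
    · -- β is a monomial
      rintro _ ⟨B, hB, rfl⟩
      have hBcard : B.card = v - i := hB
      intro γ hγ
      refine Submodule.span_induction (p := fun γ _ =>
          contr (mono K (⇑e.dualBasis) A) γ * mono K (⇑e) B
            = ((-1 : K) ^ ((v - 1) * (i + j) + i * j)) •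
              (contr (mono K (⇑e.dualBasis) A) (mono K (⇑e) B) * γ)) ?_ ?_ ?_ ?_ hγ
      · -- γ is a monomial : the core case
        rintro _ ⟨C, hC, rfl⟩
        have hCcard : C.card = v - j := hC
        have hACle : A.card ≤ C.card := by rw [hAcard, hCcard]; omega
        have hABle : A.card ≤ B.card := by rw [hAcard, hBcard]; omega
        rw [contr_mono K e pair hpair_det contr hcontr_deg hcontr_char hACle,
          contr_mono K e pair hpair_det contr hcontr_deg hcontr_char hABle]
        by_cases h1 : A ⊆ C ∧ Disjoint (C \ A) B
        · have h2 : A ⊆ B ∧ Disjoint (B \ A) C :=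
            cond_forward hij hAcard hBcard hCcard h1.1 h1.2
          have hXcard : (C \ A).card = i := by
            rw [Finset.card_sdiff_of_subset h1.1, hAcard, hCcard]; omega
          have hYcard : (B \ A).card = j := by
            rw [Finset.card_sdiff_of_subset h2.1, hAcard, hBcard]; omega
          rw [if_pos h1.1, if_pos h2.1, smul_mul_assoc, smul_mul_assoc,
            mono_mul_mono_disjoint K (⇑e) (C \ A).card _ _ rfl h1.2,
            mono_mul_mono_disjoint K (⇑e) (B \ A).card _ _ rfl h2.2]
          have hXU : (C \ A) ∪ B = Finset.univ := by
            apply Finset.eq_univ_of_card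
            rw [Finset.card_union_of_disjoint h1.2, hXcard, hBcard, Fintype.card_fin]
            omega
          have hYU : (B \ A) ∪ C = Finset.univ := by
            apply Finset.eq_univ_of_card
            rw [Finset.card_union_of_disjoint h2.2, hYcard, hCcard, Fintype.card_fin]
            omega
          rw [hXU, hYU, smul_smul, smul_smul, smul_smul]
          congr 1
          rw [← pow_add, ← pow_add, ← pow_add]
          apply ContractionSign.neg_one_pow_congr
          -- parity bookkeeping
          have hdAY : Disjoint A (B \ A) := Finset.disjoint_sdiff
          have hdAX : Disjoint A (C \ A) := Finset.disjoint_sdiff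
          have hdXY : Disjoint (C \ A) (B \ A) :=
            Finset.disjoint_of_subset_right Finset.sdiff_subset h1.2
          have f1 : finInv (C \ A) B = finInv (C \ A) A + finInv (C \ A) (B \ A) := by
            conv_lhs => rw [← Finset.union_sdiff_of_subset h2.1]
            exact finInv_union_right hdAY
          have f2 : finInv (B \ A) C = finInv (B \ A) A + finInv (B \ A) (C \ A) := by
            conv_lhs => rw [← Finset.union_sdiff_of_subset h1.1]
            exact finInv_union_right hdAX
          have f3 : finInv A (C \ A) + finInv (C \ A) A = (v - i - j) * i := by
            rw [finInv_add_finInv hdAX, hAcard, hXcard]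
          have f4 : finInv A (B \ A) + finInv (B \ A) A = (v - i - j) * j := by
            rw [finInv_add_finInv hdAY, hAcard, hYcard]
          have f5 : finInv (C \ A) (B \ A) + finInv (B \ A) (C \ A) = i * j := by
            rw [finInv_add_finInv hdXY, hXcard, hYcard]
          have hEven := even_key hij hv
          rw [f1, f2]
          generalize (v - i - j) * i = q1 at f3 hEven
          generalize (v - i - j) * j = q2 at f4 hEven
          generalize (v - 1) * (i + j) = q3 at hEven ⊢
          generalize i * j = q4 at f5 ⊢
          omega
        · have h2 : ¬ (A ⊆ B ∧ Disjoint (B \ A) C) := by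
            intro hc
            apply h1
            have hA' : A.card = v - j - i := by rw [hAcard]; omega
            exact cond_forward (by omega) hA' hCcard hBcard hc.1 hc.2
          have hL : (if A ⊆ C then
                ((-1 : K) ^ finInv A (C \ A)) • mono K (⇑e) (C \ A) else 0) * mono K (⇑e) B
              = 0 := by
            by_cases hc : A ⊆ C
            · rw [if_pos hc, smul_mul_assoc,
                mono_mul_mono_not_disjoint K (⇑e) (fun hd => h1 ⟨hc, hd⟩), smul_zero]
            · rw [if_neg hc, zero_mul]
          have hR : (if A ⊆ B then
                ((-1 : K) ^ finInv A (B \ A)) • mono K (⇑e) (B \ A) else 0) * mono K (⇑e) C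
              = 0 := by
            by_cases hc : A ⊆ B
            · rw [if_pos hc, smul_mul_assoc,
                mono_mul_mono_not_disjoint K (⇑e) (fun hd => h2 ⟨hc, hd⟩), smul_zero]
            · rw [if_neg hc, zero_mul]
          rw [hL, hR, smul_zero]
      · -- γ = 0
        show contr (mono K (⇑e.dualBasis) A) 0 * mono K (⇑e) B
          = ((-1 : K) ^ ((v - 1) * (i + j) + i * j)) •
            (contr (mono K (⇑e.dualBasis) A) (mono K (⇑e) B) * 0)
        rw [(contr (mono K (⇑e.dualBasis) A)).map_zero, zero_mul, mul_zero, smul_zero]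
      · -- γ add
        intro x y _ _ hx hy
        rw [map_add, add_mul, hx, hy, ← smul_add, ← mul_add]
      · -- γ smul
        intro c x _ hx
        rw [map_smul, smul_mul_assoc, hx, mul_smul_comm, smul_comm]
    · -- β = 0
      intro γ _
      rw [mul_zero, (contr (mono K (⇑e.dualBasis) A)).map_zero, zero_mul, smul_zero]
    · -- β add
      intro x y _ _ hx hy γ hγ
      rw [map_add, mul_add, add_mul, hx γ hγ, hy γ hγ, ← smul_add, ← add_mul]
    · -- β smul
      intro c x _ hx γ hγ
      rw [map_smul, mul_smul_comm, smul_mul_assoc, hx γ hγ, smul_comm]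
  · -- a = 0
    intro β _ γ _
    rw [contr.map_zero, LinearMap.zero_apply, LinearMap.zero_apply, zero_mul, zero_mul, smul_zero]
  · -- a add
    intro x y _ _ hx hy β hβ γ hγ
    rw [map_add, LinearMap.add_apply, LinearMap.add_apply, add_mul, add_mul,
      hx β hβ γ hγ, hy β hβ γ hγ, smul_add]
  · -- a smul
    intro c x _ hx β hβ γ hγ
    rw [map_smul, LinearMap.smul_apply, LinearMap.smul_apply, smul_mul_assoc, smul_mul_assoc,
      hx β hβ γ hγ, smul_comm]
end

section
/- Let K be a field, V a nonzero finite-dimensional K-vector space, E = ∧V its exterior algebra, and 𝔪 ⊂ E the two-sided augmentation ideal generated by V (the elements of strictly negative degree in the paper's grading). Let G be a finitely generated left E-module and let F be a nonzero finitely generated free left E-module. Then there is no injective E-module homomorphism φ : F → G with φ(F) ⊆ 𝔪G. -/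
section

variable (K : Type*) [Field K] (V : Type*) [AddCommGroup V] [Module K V]

/-- The augmentation ideal `𝔪` of the exterior algebra `E = ∧V`: the (two-sided)
ideal generated by `V`, realized as the span in `E` of all products `y * v * z`
with `v ∈ V` (the set of finite sums of such products is exactly the two-sided
ideal generated by `V`). -/
def augmentationIdeal : Ideal (ExteriorAlgebra K V) :=
  Ideal.span {x : ExteriorAlgebra K V | ∃ (y z : ExteriorAlgebra K V) (v : V),
      x = y * ExteriorAlgebra.ι K v * z}

variable (G : Type*) [AddCommGroup G] [Module (ExteriorAlgebra K V) G]

/-- The submodule `𝔪G` of an `E`-module `G`: the span of the products `m • g`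
with `m ∈ 𝔪` and `g ∈ G`. -/
def augSmul : Submodule (ExteriorAlgebra K V) G :=
  Submodule.span (ExteriorAlgebra K V)
    {x : G | ∃ m ∈ augmentationIdeal K V, ∃ g : G, x = m • g}

/-- **Minimality obstruction over the exterior algebra** (key step in the paper's
generalized Mumford lemma): if `V` is a nonzero finite-dimensional vector space,
`E = ∧V`, `G` a finitely generated `E`-module and `F` a nonzero finitely generated
free `E`-module, then there is no injective `E`-module homomorphism `φ : F → G`
with image contained in `𝔪G`. -/
theorem no_injective_into_radical
    [FiniteDimensional K V] [Nontrivial V]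
    [Module.Finite (ExteriorAlgebra K V) G]
    (F : Type*) [AddCommGroup F] [Module (ExteriorAlgebra K V) F]
    [Module.Free (ExteriorAlgebra K V) F] [Module.Finite (ExteriorAlgebra K V) F]
    [Nontrivial F] :
    ¬∃ φ : F →ₗ[ExteriorAlgebra K V] G,
        Function.Injective φ ∧ ∀ x : F, φ x ∈ augSmul K V G := by
  rintro ⟨φ, hinj, hsub⟩
  set n := Module.finrank K V with hn
  set b := Module.finBasis K V with hb
  set ω : ExteriorAlgebra K V := ExteriorAlgebra.ιMulti K n (fun i => b i) with hωdef
  -- ω ≠ 0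
  have hω : ω ≠ 0 := by
    intro h
    have h2 := congrArg (ExteriorAlgebra.liftAlternating
      (Function.update (fun _ => 0) n b.det)) h
    rw [hωdef, ExteriorAlgebra.liftAlternating_apply_ιMulti, map_zero,
      Function.update_self] at h2
    exact one_ne_zero ((Module.Basis.det_self b).symm.trans h2)
  -- ω * ι (b j) = 0
  have hj : ∀ j : Fin n, ω * ExteriorAlgebra.ι K (b j) = 0 := by
    intro j
    have h1 : ExteriorAlgebra.ιMulti K (n+1) (Fin.snoc (fun i => b i) (b j)) = 0 := by
      refine AlternatingMap.map_eq_zero_of_eq _ _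
        (i := Fin.castSucc j) (j := Fin.last n) (by simp) ?_
      exact ne_of_lt (Fin.castSucc_lt_last j)
    rw [ExteriorAlgebra.ιMulti_apply, List.ofFn_succ', List.concat_eq_append,
      List.prod_append, List.prod_singleton] at h1
    simpa [Function.comp, ExteriorAlgebra.ιMulti_apply, hωdef] using h1
  have hιv : ∀ v : V, ω * ExteriorAlgebra.ι K v = 0 := by
    intro v
    have hv : v = Finset.univ.sum fun j : Fin n => b.repr v j • b j := by
      conv_lhs => rw [← b.sum_repr v]
    rw [hv]
    simp only [map_sum, map_smul, Finset.mul_sum]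
    refine Finset.sum_eq_zero fun j _ => ?_
    rw [mul_smul_comm, hj j, smul_zero]
  -- key commutation
  have key : ∀ u : ExteriorAlgebra K V, ω * u = algebraMap K (ExteriorAlgebra K V) (ExteriorAlgebra.algebraMapInv u) * ω := by
    intro u
    induction u using ExteriorAlgebra.induction with
    | algebraMap r =>
        rw [ExteriorAlgebra.algebraMap_leftInverse, Algebra.commutes]
    | ι x =>
        rw [hιv x]
        simp [ExteriorAlgebra.algebraMapInv, ExteriorAlgebra.lift_ι_apply]
    | mul a c ha hc =>
        calc ω * (a * c) = (ω * a) * c := by rw [mul_assoc]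
          _ = algebraMap K (ExteriorAlgebra K V) (ExteriorAlgebra.algebraMapInv a) * (ω * c) := by
              rw [ha, mul_assoc]
          _ = algebraMap K (ExteriorAlgebra K V) (ExteriorAlgebra.algebraMapInv a) *
              (algebraMap K (ExteriorAlgebra K V) (ExteriorAlgebra.algebraMapInv c) * ω) := by rw [hc]
          _ = algebraMap K (ExteriorAlgebra K V) (ExteriorAlgebra.algebraMapInv (a * c)) * ω := by
              rw [map_mul, map_mul, mul_assoc]
    | add a c ha hc =>
        rw [mul_add, ha, hc, map_add, map_add, add_mul]
  -- ω kills the augmentation ideal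
  have hm : ∀ m ∈ augmentationIdeal K V, ω * m = 0 := by
    intro m hmm
    induction hmm using Submodule.span_induction with
    | mem x hx =>
        obtain ⟨y, z, v, rfl⟩ := hx
        rw [← mul_assoc, ← mul_assoc, key y, mul_assoc _ ω, hιv v, mul_zero, zero_mul]
    | zero => exact mul_zero ω
    | add x y _ _ hx hy => rw [mul_add, hx, hy, add_zero]
    | smul a x _ hx =>
        rw [smul_eq_mul, ← mul_assoc, key a, mul_assoc, hx, mul_zero]
  -- ω kills 𝔪G
  have hg : ∀ x ∈ augSmul K V G, ω • x = 0 := by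
    intro x hx
    rw [augSmul] at hx
    induction hx using Submodule.span_induction with
    | mem y hy =>
        obtain ⟨m, hmI, g, rfl⟩ := hy
        rw [← mul_smul, hm m hmI, zero_smul]
    | zero => exact smul_zero ω
    | add u v _ _ hu hv => rw [smul_add, hu, hv, add_zero]
    | smul a u _ hu =>
        rw [smul_smul, key a, mul_smul, hu, smul_zero]
  -- pick a basis element of F
  obtain ⟨i⟩ := (Module.Free.chooseBasis (ExteriorAlgebra K V) F).index_nonempty
  set bF := Module.Free.chooseBasis (ExteriorAlgebra K V) F with hbF
  set e : F := bF i with he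
  have hφ : φ (ω • e) = 0 := by
    rw [map_smul]
    exact hg _ (hsub e)
  have h0 : ω • e = 0 := hinj (by rw [hφ, map_zero])
  have := congrArg (fun y => bF.repr y i) h0
  simp only [he, map_smul, Module.Basis.repr_self, map_zero, Finsupp.coe_zero, Pi.zero_apply,
    Finsupp.coe_smul, Pi.smul_apply, Finsupp.single_eq_same, smul_eq_mul, mul_one] at this
  exact hω this



end
end
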